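/- arXiv:math/0611432 — 6 statements merged into one kernel-verified Lean document; each statement's English description precedes it below -/
import Mathlib

section
/- For every x ∈ ℝ, the quantity of data over x satisfies R^{(n)}_x = Y^{(n)}_x − I^{(n)}_x. -/
open MeasureTheory
open scoped Classical

/-- The covering `C^(n)` obtained after storing the first `n` files
`(x_0, l_0), …, (x_{n-1}, l_{n-1})`: `C^(0) = ∅` and
`C^(k+1) = C^(k) ∪ [x_k, y_k)` where `y_k` is the infimum of the `y ≥ x_k`
such that the free space `(C^(k))ᶜ ∩ [x_k, y)` has Lebesgue measure `l_k`. -/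
noncomputable def cover (x l : ℕ → ℝ) : ℕ → Set ℝ
  | 0 => ∅
  | k + 1 =>
      cover x l k ∪
        Set.Ico (x k)
          (sInf {y : ℝ | x k ≤ y ∧
            volume ((cover x l k)ᶜ ∩ Set.Ico (x k) y) = ENNReal.ofReal (l k)})

/-- `g_x(R) = sup{ y ≤ x : y ∈ R }`. -/
noncomputable def gpt (R : Set ℝ) (x : ℝ) : ℝ := sSup {y : ℝ | y ≤ x ∧ y ∈ R}

/-- The process `Y^(n)` : `Y^(n)_0 = 0` and
`Y^(n)_b - Y^(n)_a = Σ_{i < n, x_i ∈ (a,b]} l_i - (b-a)` for `a < b`. -/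
noncomputable def Yn (x l : ℕ → ℝ) (n : ℕ) (b : ℝ) : ℝ :=
  (∑ i ∈ Finset.range n, if 0 < x i ∧ x i ≤ b then l i else 0)
    - (∑ i ∈ Finset.range n, if b < x i ∧ x i ≤ 0 then l i else 0) - b

/-- The quantity of data over `z` when the first `n` files are stored:
`R^(n)_z = Σ_{i < n, x_i ∈ [g_z(R^(n)), z]} l_i - (z - g_z(R^(n)))`, where
`R^(n)` is the complement (free space) of `C^(n)`. -/
noncomputable def Rq (x l : ℕ → ℝ) (n : ℕ) (z : ℝ) : ℝ :=
  (∑ i ∈ Finset.range n,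
      if gpt ((cover x l n)ᶜ) z ≤ x i ∧ x i ≤ z then l i else 0)
    - (z - gpt ((cover x l n)ᶜ) z)

/-!
Write `Z_k(y) = Σ_{i<k, x_i ≤ y} l_i - y`, so that `Y^(k) = Z_k - Z_k(0)`, and let `I_k` be the
running infimum of `Z_k`. By induction on `k`, the free space `R^(k)` is exactly the set where
`Z_k` attains its running infimum, and `Leb(R^(k) ∩ (a, b]) = I_k(a) - I_k(b)`. In the inductive
step `Z_{k+1} = Z_k + l_k 1_{[x_k, ∞)}`: the running infimum of `Z_{k+1}` stays at `I_k(x_k)` on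
`[x_k, t]`, where `t` is the first time `I_k` reaches `I_k(x_k) - l_k`, and equals `I_k + l_k`
after `t`. So the points of `[x_k, t)` stop being free and nothing else changes; as the free space
in `[x_k, t)` has measure `l_k`, `t = y_{k+1}`.

For the theorem, let `g = g_z(R^(n))`. There is no free space in `(g, z]`, so `I_n(z) = I_n(g)`;
and `g` is free or a limit from the left of free points, so `I_n(g)` is the left limit `Z_n(g-)`.
Hence `Y_z - I_z = Z_n(z) - Z_n(g-)`, which is `R^(n)_z`.
-/

open Set Filter Topology

noncomputable def runningInf (f : ℝ → ℝ) (z : ℝ) : ℝ := sInf (f '' Iic z)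

section RunningInf

variable {f : ℝ → ℝ}

theorem runningInf_le (hbdd : ∀ z, BddBelow (f '' Iic z)) {y z : ℝ} (h : y ≤ z) :
    runningInf f z ≤ f y :=
  csInf_le (hbdd z) (mem_image_of_mem f h)

theorem le_runningInf {C z : ℝ} (h : ∀ y ≤ z, C ≤ f y) : C ≤ runningInf f z :=
  le_csInf (nonempty_Iic.image f) (forall_mem_image.2 h)

theorem runningInf_antitone (hbdd : ∀ z, BddBelow (f '' Iic z)) : Antitone (runningInf f) :=
  fun _ _ hab => le_runningInf fun _ hy => runningInf_le hbdd (hy.trans hab)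

variable (hf : ∀ a b, a ≤ b → f a ≤ f b + (b - a)) (hbdd : ∀ z, BddBelow (f '' Iic z))
include hf hbdd

theorem runningInf_le_add {a b : ℝ} (hab : a ≤ b) :
    runningInf f a ≤ runningInf f b + (b - a) := by
  rw [← sub_le_iff_le_add]
  refine le_runningInf fun y hy => ?_
  rcases le_total y a with hya | hay
  · linarith [runningInf_le hbdd hya]
  · linarith [runningInf_le hbdd (le_refl a), hf a y hay]

theorem runningInf_lipschitzWith : LipschitzWith 1 (runningInf f) := by
  refine LipschitzWith.of_le_add fun a b => ?_
  rw [Real.dist_eq]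
  rcases le_total a b with hab | hba
  · linarith [runningInf_le_add hf hbdd hab, neg_abs_le (a - b)]
  · linarith [runningInf_antitone hbdd hba, abs_nonneg (a - b)]

theorem runningInf_eq_of_isLUB {T : Set ℝ} {g L : ℝ} (hT : ∀ y ∈ T, f y ≤ runningInf f y)
    (hg : IsLUB T g) (hL : L ≤ f g) (hleft : ∀ᶠ y in 𝓝[<] g, f y = L + (g - y)) :
    runningInf f g = L := by
  obtain ⟨a, hag, hsub⟩ := mem_nhdsLT_iff_exists_Ioo_subset.1 hleft
  apply le_antisymm
  · refine le_of_forall_pos_lt_add fun ε hε => ?_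
    obtain ⟨y, hy, hyg⟩ := nonempty_Ioo.2 (max_lt hag (sub_lt_self g hε))
    have hfy : f y = L + (g - y) := hsub ⟨(le_max_left _ _).trans_lt hy, hyg⟩
    linarith [runningInf_le hbdd hyg.le, le_max_right a (g - ε)]
  · by_cases hgT : g ∈ T
    · exact hL.trans (hT g hgT)
    obtain ⟨w, hwT, haw, hwg⟩ := hg.exists_between hag
    have hwg' : w < g := lt_of_le_of_ne hwg fun h => hgT (h ▸ hwT)
    have hfw : f w = L + (g - w) := hsub ⟨haw, hwg'⟩
    linarith [hT w hwT, runningInf_le_add hf hbdd hwg]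

theorem isLeast_sInf_runningInf_eq_sub {p c : ℝ} (htop : Tendsto f atTop atBot) (hc : 0 ≤ c) :
    IsLeast {y | p ≤ y ∧ runningInf f y = runningInf f p - c}
      (sInf {y | p ≤ y ∧ runningInf f y = runningInf f p - c}) := by
  have hcont := (runningInf_lipschitzWith hf hbdd).continuous
  refine IsClosed.isLeast_csInf (isClosed_Ici.inter (isClosed_eq hcont continuous_const)) ?_
    ⟨p, fun y hy => hy.1⟩
  obtain ⟨q, hq, hpq⟩ :=
    ((htop.eventually_le_atBot (runningInf f p - c)).and (eventually_ge_atTop p)).exists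
  obtain ⟨y, hy, hIy⟩ := intermediate_value_Icc' hpq hcont.continuousOn
    ⟨(runningInf_le hbdd le_rfl).trans hq, by linarith⟩
  exact ⟨y, hy.1, hIy⟩

end RunningInf

structure IsFreeSpace (R : Set ℝ) (f : ℝ → ℝ) : Prop where
  mem_iff : ∀ z, z ∈ R ↔ f z ≤ runningInf f z
  volume_inter_Ioc : ∀ a b, a ≤ b →
    volume (R ∩ Ioc a b) = ENNReal.ofReal (runningInf f a - runningInf f b)

theorem IsFreeSpace.runningInf_eq_of_inter_Ioc_eq_empty {R : Set ℝ} {f : ℝ → ℝ}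
    (hR : IsFreeSpace R f) (hbdd : ∀ z, BddBelow (f '' Iic z)) {a b : ℝ} (hab : a ≤ b)
    (h : R ∩ Ioc a b = ∅) : runningInf f a = runningInf f b := by
  have hvol := hR.volume_inter_Ioc a b hab
  rw [h, measure_empty, eq_comm, ENNReal.ofReal_eq_zero] at hvol
  linarith [runningInf_antitone hbdd hab]

theorem Ioc_inter_Ioc_eq_Ioc_max_min {α : Type*} [LinearOrder α] (a b p t : α) :
    Ioc a b ∩ Ioc p t = Ioc (max p (min a t)) (max p (min b t)) := by
  ext y
  simp only [mem_inter_iff, mem_Ioc, max_lt_iff, min_lt_iff, le_max_iff, le_min_iff]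
  grind

section Step

variable {f g : ℝ → ℝ} {p c : ℝ} (hf : ∀ a b, a ≤ b → f a ≤ f b + (b - a))
  (hbdd : ∀ z, BddBelow (f '' Iic z)) (hc : 0 ≤ c) (hg : ∀ y, g y = f y + if p ≤ y then c else 0)
include hf hbdd hc hg

theorem runningInf_eq_min_of_add_step (z : ℝ) :
    runningInf g z = min (runningInf f (min z p)) (runningInf f z + c) := by
  have hfg : ∀ y, f y ≤ g y := fun y => by rw [hg]; split_ifs <;> linarith
  have hgf : ∀ y, g y ≤ f y + c := fun y => by rw [hg]; split_ifs <;> linarith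
  have hbdd' : ∀ z, BddBelow (g '' Iic z) := fun z =>
    let ⟨b, hb⟩ := hbdd z
    ⟨b, forall_mem_image.2 fun y hy => (hb (mem_image_of_mem f hy)).trans (hfg y)⟩
  refine le_antisymm (le_min ?_ ?_) (le_runningInf fun y hy => ?_)
  · refine le_runningInf fun y hy => le_of_forall_pos_le_add fun ε hε => ?_
    have hyz := hy.trans (min_le_left z p)
    have hyp : ¬ p ≤ y - ε := by linarith [hy.trans (min_le_right z p)]
    calc runningInf g z ≤ g (y - ε) := runningInf_le hbdd' (by linarith)
      _ = f (y - ε) := by rw [hg, if_neg hyp, add_zero]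
      _ ≤ f y + ε := by linarith [hf (y - ε) y (by linarith)]
  · rw [← sub_le_iff_le_add]
    exact le_runningInf fun y hy => by linarith [runningInf_le hbdd' hy, hgf y]
  · rw [hg]
    split_ifs with hpy
    · exact min_le_of_right_le (add_le_add_left (runningInf_le hbdd hy) c)
    · rw [add_zero]
      exact min_le_of_left_le (runningInf_le hbdd (le_min hy (not_le.1 hpy).le))

theorem runningInf_add_step_of_lt {z : ℝ} (hz : z < p) : runningInf g z = runningInf f z := by
  rw [runningInf_eq_min_of_add_step hf hbdd hc hg, min_eq_left hz.le,
    min_eq_left (le_add_of_nonneg_right hc)]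

variable {t : ℝ} (ht : IsLeast {y | p ≤ y ∧ runningInf f y = runningInf f p - c} t)
include ht

theorem runningInf_add_step_of_mem_Icc {z : ℝ} (hz : z ∈ Icc p t) :
    runningInf g z = runningInf f p := by
  rw [runningInf_eq_min_of_add_step hf hbdd hc hg, min_eq_right hz.1, min_eq_left]
  linarith [runningInf_antitone hbdd hz.2, ht.1.2]

theorem runningInf_add_step_of_le {z : ℝ} (hz : t ≤ z) :
    runningInf g z = runningInf f z + c := by
  rw [runningInf_eq_min_of_add_step hf hbdd hc hg, min_eq_right (ht.1.1.trans hz), min_eq_right]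
  linarith [runningInf_antitone hbdd hz, ht.1.2]

theorem le_runningInf_add_step_iff (z : ℝ) :
    g z ≤ runningInf g z ↔ f z ≤ runningInf f z ∧ z ∉ Ico p t := by
  rcases lt_or_ge z p with hzp | hpz
  · rw [runningInf_add_step_of_lt hf hbdd hc hg hzp, hg, if_neg (not_le.2 hzp), add_zero]
    simp [not_le.2 hzp]
  rcases lt_or_ge z t with hzt | htz
  · have hlt : runningInf f p - c < runningInf f z :=
      lt_of_le_of_ne (ht.1.2 ▸ runningInf_antitone hbdd hzt.le)
        fun h => (ht.2 ⟨hpz, h.symm⟩).not_gt hzt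
    rw [runningInf_add_step_of_mem_Icc hf hbdd hc hg ht ⟨hpz, hzt.le⟩, hg, if_pos hpz]
    simp only [mem_Ico, hpz, hzt, and_self, not_true_eq_false, and_false, iff_false, not_le]
    linarith [runningInf_le hbdd (le_refl z)]
  · rw [runningInf_add_step_of_le hf hbdd hc hg ht htz, hg, if_pos hpz]
    simp [not_lt.2 htz]

theorem runningInf_add_step_eq (z : ℝ) :
    runningInf g z = runningInf f z - runningInf f (max p (min z t)) + runningInf f p := by
  have hpt : p ≤ t := ht.1.1
  rcases lt_or_ge z p with hzp | hpz
  · rw [runningInf_add_step_of_lt hf hbdd hc hg hzp, min_eq_left (hzp.le.trans hpt),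
      max_eq_left hzp.le]
    ring
  rcases le_total z t with hzt | htz
  · rw [runningInf_add_step_of_mem_Icc hf hbdd hc hg ht ⟨hpz, hzt⟩, min_eq_left hzt,
      max_eq_right hpz]
    ring
  · rw [runningInf_add_step_of_le hf hbdd hc hg ht htz, min_eq_right htz, max_eq_right hpt,
      ht.1.2]
    ring

theorem IsFreeSpace.add_step {R : Set ℝ} (hR : IsFreeSpace R f) : IsFreeSpace (R \ Ico p t) g := by
  refine ⟨fun z => ?_, fun a b hab => ?_⟩
  · rw [le_runningInf_add_step_iff hf hbdd hc hg ht, ← hR.mem_iff, Set.mem_sdiff]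
  have hmono : max p (min a t) ≤ max p (min b t) := max_le_max le_rfl (min_le_min_right t hab)
  have hfin : volume (R ∩ Ioc a b ∩ Ioc p t) ≠ ⊤ :=
    ((measure_mono inter_subset_right).trans_lt measure_Ioc_lt_top).ne
  calc volume (R \ Ico p t ∩ Ioc a b) = volume ((R ∩ Ioc a b) \ Ioc p t) := by
        rw [← inter_sdiff_right_comm]
        exact measure_congr ((ae_eq_refl _).diff Ico_ae_eq_Ioc)
    _ = volume (R ∩ Ioc a b) - volume (R ∩ Ioc a b ∩ Ioc p t) :=
        ENNReal.eq_sub_of_add_eq hfin (measure_sdiff_add_inter _ measurableSet_Ioc)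
    _ = ENNReal.ofReal (runningInf f a - runningInf f b)
          - ENNReal.ofReal (runningInf f (max p (min a t)) - runningInf f (max p (min b t))) := by
        rw [inter_assoc, Ioc_inter_Ioc_eq_Ioc_max_min, hR.volume_inter_Ioc a b hab,
          hR.volume_inter_Ioc _ _ hmono]
    _ = ENNReal.ofReal (runningInf g a - runningInf g b) := by
        rw [← ENNReal.ofReal_sub _ (sub_nonneg.2 (runningInf_antitone hbdd hmono)),
          runningInf_add_step_eq hf hbdd hc hg ht, runningInf_add_step_eq hf hbdd hc hg ht]
        ring_nf

end Step

noncomputable def netLoad (x l : ℕ → ℝ) (k : ℕ) (y : ℝ) : ℝ :=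
  (∑ i ∈ Finset.range k, if x i ≤ y then l i else 0) - y

noncomputable def netLoadLeft (x l : ℕ → ℝ) (k : ℕ) (y : ℝ) : ℝ :=
  (∑ i ∈ Finset.range k, if x i < y then l i else 0) - y

section NetLoad

variable (x l : ℕ → ℝ) (k : ℕ)

theorem netLoad_succ (y : ℝ) :
    netLoad x l (k + 1) y = netLoad x l k y + if x k ≤ y then l k else 0 := by
  simp only [netLoad, Finset.sum_range_succ]
  ring

theorem Yn_eq_netLoad_sub (y : ℝ) : Yn x l k y = netLoad x l k y - netLoad x l k 0 := by
  have hterm := Finset.sum_congr (s₁ := Finset.range k) rfl fun i _ =>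
    show (if 0 < x i ∧ x i ≤ y then l i else 0) - (if y < x i ∧ x i ≤ 0 then l i else 0)
      = (if x i ≤ y then l i else 0) - (if x i ≤ 0 then l i else 0) by grind
  simp only [Finset.sum_sub_distrib] at hterm
  simp only [Yn, netLoad]
  linarith

theorem eventually_netLoad_eq (g : ℝ) :
    ∀ᶠ y in 𝓝[<] g, netLoad x l k y = netLoadLeft x l k g + (g - y) := by
  have hcond : ∀ᶠ y in 𝓝[<] g, ∀ i ∈ Finset.range k, (x i ≤ y ↔ x i < g) :=
    (Finset.eventually_all _).2 fun i _ => by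
      rcases lt_or_ge (x i) g with hxg | hgx
      · filter_upwards [Ioo_mem_nhdsLT hxg] with y hy using iff_of_true hy.1.le hxg
      · filter_upwards [self_mem_nhdsWithin] with y (hy : y < g)
          using iff_of_false (by linarith) (not_lt.2 hgx)
  filter_upwards [hcond] with y hy
  simp only [netLoad, netLoadLeft]
  rw [Finset.sum_congr rfl fun i hi => if_congr (hy i hi) rfl rfl]
  ring

theorem netLoad_sub_netLoadLeft {a b : ℝ} (hab : a ≤ b) :
    netLoad x l k b - netLoadLeft x l k a
      = (∑ i ∈ Finset.range k, if a ≤ x i ∧ x i ≤ b then l i else 0) - (b - a) := by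
  simp only [netLoad, netLoadLeft]
  rw [sub_sub_sub_comm, ← Finset.sum_sub_distrib]
  congr 1
  exact Finset.sum_congr rfl fun i _ => by grind

variable {l} (hl : ∀ i, 0 ≤ l i)
include hl

theorem netLoad_le_add (a b : ℝ) (hab : a ≤ b) : netLoad x l k a ≤ netLoad x l k b + (b - a) := by
  have : (∑ i ∈ Finset.range k, if x i ≤ a then l i else 0)
      ≤ ∑ i ∈ Finset.range k, if x i ≤ b then l i else 0 :=
    Finset.sum_le_sum fun i _ => by split_ifs <;> linarith [hl i]
  simp only [netLoad]
  linarith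

theorem netLoadLeft_le_netLoad (y : ℝ) : netLoadLeft x l k y ≤ netLoad x l k y := by
  have : (∑ i ∈ Finset.range k, if x i < y then l i else 0)
      ≤ ∑ i ∈ Finset.range k, if x i ≤ y then l i else 0 :=
    Finset.sum_le_sum fun i _ => by split_ifs <;> linarith [hl i]
  simp only [netLoad, netLoadLeft]
  linarith

theorem bddBelow_netLoad_image_Iic (z : ℝ) : BddBelow (netLoad x l k '' Iic z) := by
  refine ⟨-z, forall_mem_image.2 fun y (hy : y ≤ z) => ?_⟩
  have : 0 ≤ ∑ i ∈ Finset.range k, if x i ≤ y then l i else 0 :=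
    Finset.sum_nonneg fun i _ => by split_ifs <;> linarith [hl i]
  simp only [netLoad]
  linarith

theorem tendsto_netLoad_atTop : Tendsto (netLoad x l k) atTop atBot := by
  refine tendsto_atBot_mono (fun y => ?_)
    (tendsto_atBot_add_const_left _ (∑ i ∈ Finset.range k, l i) tendsto_neg_atTop_atBot)
  have : (∑ i ∈ Finset.range k, if x i ≤ y then l i else 0) ≤ ∑ i ∈ Finset.range k, l i :=
    Finset.sum_le_sum fun i _ => by split_ifs <;> linarith [hl i]
  simp only [netLoad]
  linarith

theorem sInf_Yn_image_Iic (z : ℝ) :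
    sInf (Yn x l k '' Iic z) = runningInf (netLoad x l k) z - netLoad x l k 0 := by
  have hYn : Yn x l k = OrderIso.subRight (netLoad x l k 0) ∘ netLoad x l k :=
    funext (Yn_eq_netLoad_sub x l k)
  rw [hYn, image_comp, ← OrderIso.map_csInf' _ (nonempty_Iic.image _)
    (bddBelow_netLoad_image_Iic x k hl z)]
  rfl

theorem isFreeSpace_cover : IsFreeSpace (cover x l k)ᶜ (netLoad x l k) := by
  induction k with
  | zero =>
    have hI : ∀ z, runningInf (netLoad x l 0) z = -z := fun z =>
      le_antisymm
        (by simpa [netLoad] using runningInf_le (bddBelow_netLoad_image_Iic x 0 hl) (le_refl z))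
        (le_runningInf fun y hy => by simpa [netLoad] using hy)
    refine ⟨fun z => ?_, fun a b _ => ?_⟩
    · simp [cover, hI, netLoad]
    · rw [hI, hI, cover, compl_empty, univ_inter, Real.volume_Ioc, neg_sub_neg]
  | succ k ih =>
    have hf := netLoad_le_add x k hl
    have hbdd := bddBelow_netLoad_image_Iic x k hl
    have hset : {y | x k ≤ y ∧ volume ((cover x l k)ᶜ ∩ Ico (x k) y) = ENNReal.ofReal (l k)}
        = {y | x k ≤ y ∧
            runningInf (netLoad x l k) y = runningInf (netLoad x l k) (x k) - l k} := by
      ext y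
      refine and_congr_right fun hy => ?_
      rw [measure_congr ((ae_eq_refl _).inter Ico_ae_eq_Ioc), ih.volume_inter_Ioc _ _ hy,
        ENNReal.ofReal_eq_ofReal_iff (sub_nonneg.2 (runningInf_antitone hbdd hy)) (hl k)]
      constructor <;> intro h <;> linarith
    rw [cover, hset, compl_union, ← sdiff_eq]
    exact ih.add_step hf hbdd (hl k) (netLoad_succ x l k)
      (isLeast_sInf_runningInf_eq_sub hf hbdd (tendsto_netLoad_atTop x k hl) (hl k))

end NetLoad

theorem exists_cover_subset_Ici (x l : ℕ → ℝ) (k : ℕ) : ∃ m, cover x l k ⊆ Ici m := by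
  induction k with
  | zero => exact ⟨0, by simp [cover]⟩
  | succ k ih =>
    obtain ⟨m, hm⟩ := ih
    refine ⟨min m (x k), union_subset (hm.trans (Ici_subset_Ici.2 (min_le_left _ _))) ?_⟩
    exact fun y hy => (min_le_right m (x k)).trans hy.1

theorem quantity_of_data_eq_Y_sub_inf_general
    (x l : ℕ → ℝ) (n : ℕ) (hl : ∀ i, 0 < l i) (z : ℝ) :
    Rq x l n z = Yn x l n z - sInf (Yn x l n '' Set.Iic z) := by
  have hl₀ : ∀ i, 0 ≤ l i := fun i => (hl i).le
  set R := (cover x l n)ᶜ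
  have hR : IsFreeSpace R (netLoad x l n) := isFreeSpace_cover x n hl₀
  obtain ⟨m, hm⟩ := exists_cover_subset_Ici x l n
  have hT : IsLUB {y | y ≤ z ∧ y ∈ R} (gpt R z) :=
    isLUB_csSup ⟨min z (m - 1), min_le_left _ _, fun h => by
      linarith [mem_Ici.1 (hm h), min_le_right z (m - 1)]⟩ ⟨z, fun _ hy => hy.1⟩
  have hgz : gpt R z ≤ z := hT.2 fun _ hy => hy.1
  have hgap : R ∩ Ioc (gpt R z) z = ∅ :=
    eq_empty_of_forall_notMem fun y ⟨hyR, hgy, hyz⟩ => (hT.1 ⟨hyz, hyR⟩).not_gt hgy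
  have hI : runningInf (netLoad x l n) z = netLoadLeft x l n (gpt R z) := by
    rw [← hR.runningInf_eq_of_inter_Ioc_eq_empty (bddBelow_netLoad_image_Iic x n hl₀) hgz hgap]
    exact runningInf_eq_of_isLUB (netLoad_le_add x n hl₀) (bddBelow_netLoad_image_Iic x n hl₀)
      (fun y hy => (hR.mem_iff y).1 hy.2) hT (netLoadLeft_le_netLoad x n hl₀ _)
      (eventually_netLoad_eq x l n _)
  rw [Rq, ← netLoad_sub_netLoadLeft x l n hgz, sInf_Yn_image_Iic x n hl₀, Yn_eq_netLoad_sub, hI]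
  ring

/-- For every `z ∈ ℝ`, `R^(n)_z = Y^(n)_z - I^(n)_z`, where
`I^(n)_z = inf{ Y^(n)_y : y ≤ z }`. -/
theorem quantity_of_data_eq_Y_sub_inf
    (x l : ℕ → ℝ) (n : ℕ) (hn : 1 ≤ n) (hl : ∀ i, 0 < l i) (z : ℝ) :
    Rq x l n z = Yn x l n z - sInf (Yn x l n '' Set.Iic z) :=
  quantity_of_data_eq_Y_sub_inf_general x l n hl z
end

section
/- For every x ∈ ℝ, R^{(n)}_x = sup{ Σ_{i ≤ n : x_i ∈ [y,x]} l_i − (x − y) : y ≤ x }. -/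
open MeasureTheory
open scoped Classical

namespace TetrisAux

variable (x l : ℕ → ℝ)

noncomputable def yend (k : ℕ) : ℝ :=
  sInf {y : ℝ | x k ≤ y ∧
    volume ((cover x l k)ᶜ ∩ Set.Ico (x k) y) = ENNReal.ofReal (l k)}

theorem cover_succ (k : ℕ) :
    cover x l (k + 1) = cover x l k ∪ Set.Ico (x k) (yend x l k) := rfl

theorem cover_zero : cover x l 0 = ∅ := rfl

theorem measurable_cover : ∀ k, MeasurableSet (cover x l k)
  | 0 => MeasurableSet.empty
  | k + 1 => ((measurable_cover k).union measurableSet_Ico)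

theorem cover_mono : Monotone (cover x l) := by
  apply monotone_nat_of_le_succ
  intro k
  rw [cover_succ]
  exact Set.subset_union_left

theorem cover_fin : ∀ k, volume (cover x l k) ≠ ⊤
  | 0 => by simp [cover_zero]
  | k + 1 => by
    rw [cover_succ]
    refine ne_of_lt (lt_of_le_of_lt (measure_union_le _ _) ?_)
    exact ENNReal.add_lt_top.2 ⟨(cover_fin k).lt_top, measure_Ico_lt_top⟩

theorem yend_spec (k : ℕ) (hl0 : 0 ≤ l k) :
    x k ≤ yend x l k ∧
      volume ((cover x l k)ᶜ ∩ Set.Ico (x k) (yend x l k)) = ENNReal.ofReal (l k) := by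
  set C := cover x l k with hC
  set a := x k with ha
  have hfin : ∀ y : ℝ, volume (Cᶜ ∩ Set.Ico a y) ≠ ⊤ := fun y =>
    ne_of_lt (lt_of_le_of_lt (measure_mono Set.inter_subset_right) measure_Ico_lt_top)
  set ψ : ℝ → ℝ := fun y => (volume (Cᶜ ∩ Set.Ico a y)).toReal with hψ
  have hmono : Monotone ψ := fun y y' hyy =>
    ENNReal.toReal_mono (hfin y')
      (measure_mono (Set.inter_subset_inter_right _ (Set.Ico_subset_Ico_right hyy)))
  have hlip : ∀ y y' : ℝ, y ≤ y' → ψ y' ≤ ψ y + (y' - y) := by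
    intro y y' hyy
    have hsub : Cᶜ ∩ Set.Ico a y' ⊆ (Cᶜ ∩ Set.Ico a y) ∪ Set.Ico y y' := by
      rintro w ⟨hw1, hw2, hw3⟩
      rcases lt_or_ge w y with h | h
      · exact Or.inl ⟨hw1, hw2, h⟩
      · exact Or.inr ⟨h, hw3⟩
    have : volume (Cᶜ ∩ Set.Ico a y') ≤ volume (Cᶜ ∩ Set.Ico a y) + volume (Set.Ico y y') :=
      (measure_mono hsub).trans (measure_union_le _ _)
    have h2 : (volume (Cᶜ ∩ Set.Ico a y) + volume (Set.Ico y y')).toReal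
        = ψ y + (y' - y) := by
      rw [ENNReal.toReal_add (hfin y) (ne_of_lt measure_Ico_lt_top), Real.volume_Ico,
        ENNReal.toReal_ofReal (by linarith)]
    calc ψ y' ≤ (volume (Cᶜ ∩ Set.Ico a y) + volume (Set.Ico y y')).toReal :=
          ENNReal.toReal_mono (by
            refine ne_of_lt (ENNReal.add_lt_top.2 ⟨(hfin y).lt_top, measure_Ico_lt_top⟩)) this
      _ = ψ y + (y' - y) := h2
  have hcont : Continuous ψ := by
    refine (LipschitzWith.of_dist_le_mul (K := 1) (f := ψ) ?_).continuous
    intro y y'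
    rw [Real.dist_eq, Real.dist_eq, NNReal.coe_one, one_mul]
    rcases le_total y y' with h | h
    · rw [abs_sub_comm, abs_of_nonneg (by linarith [hmono h]), abs_of_nonpos (by linarith)]
      linarith [hlip y y' h]
    · rw [abs_of_nonneg (by linarith [hmono h]), abs_of_nonneg (by linarith)]
      linarith [hlip y' y h]
  have hψa : ψ a = 0 := by simp [hψ]
  set b : ℝ := a + (l k + (volume C).toReal) with hb
  have hM : 0 ≤ (volume C).toReal := ENNReal.toReal_nonneg
  have hab : a ≤ b := by rw [hb]; linarith
  have hψb : l k ≤ ψ b := by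
    have h1 : volume (Set.Ico a b) ≤ volume (Set.Ico a b ∩ C) + volume (Set.Ico a b \ C) :=
      (measure_mono (fun w hw => by
        by_cases h : w ∈ C
        · exact Or.inl ⟨hw, h⟩
        · exact Or.inr ⟨hw, h⟩)).trans (measure_union_le _ _)
    have h2 : Set.Ico a b \ C = Cᶜ ∩ Set.Ico a b := by
      ext w; simp [Set.mem_diff, and_comm]
    rw [h2] at h1
    have h3 : (volume (Set.Ico a b)).toReal = b - a := by
      rw [Real.volume_Ico, ENNReal.toReal_ofReal (by linarith)]
    have h4 : (volume (Set.Ico a b ∩ C)).toReal ≤ (volume C).toReal :=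
      ENNReal.toReal_mono (cover_fin x l k) (measure_mono Set.inter_subset_right)
    have h5 : (volume (Set.Ico a b)).toReal
        ≤ (volume (Set.Ico a b ∩ C)).toReal + ψ b := by
      rw [← ENNReal.toReal_add (ne_of_lt (lt_of_le_of_lt
        (measure_mono Set.inter_subset_left) measure_Ico_lt_top)) (hfin b)]
      exact ENNReal.toReal_mono (by
        refine ne_of_lt (ENNReal.add_lt_top.2 ⟨lt_of_le_of_lt
          (measure_mono Set.inter_subset_left) measure_Ico_lt_top, (hfin b).lt_top⟩)) h1
    rw [h3] at h5
    have : b - a = l k + (volume C).toReal := by rw [hb]; ring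
    linarith
  have hIVT : ∃ c ∈ Set.Icc a b, ψ c = l k := by
    have := intermediate_value_Icc hab hcont.continuousOn
    have hmem : l k ∈ Set.Icc (ψ a) (ψ b) := by rw [hψa]; exact ⟨hl0, hψb⟩
    obtain ⟨c, hc1, hc2⟩ := this hmem
    exact ⟨c, hc1, hc2⟩
  obtain ⟨c, hc1, hc2⟩ := hIVT
  set T := {y : ℝ | a ≤ y ∧ volume (Cᶜ ∩ Set.Ico a y) = ENNReal.ofReal (l k)} with hT
  have hTeq : T = {y : ℝ | a ≤ y} ∩ ψ ⁻¹' {l k} := by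
    ext w
    simp only [hT, Set.mem_setOf_eq, Set.mem_inter_iff, Set.mem_preimage,
      Set.mem_singleton_iff]
    constructor
    · rintro ⟨h1, h2⟩
      exact ⟨h1, by rw [hψ]; simp only; rw [h2, ENNReal.toReal_ofReal hl0]⟩
    · rintro ⟨h1, h2⟩
      refine ⟨h1, ?_⟩
      rw [← h2, hψ, ENNReal.ofReal_toReal (hfin w)]
  have hTne : T.Nonempty := ⟨c, hc1.1, by
    rw [← hc2, hψ, ENNReal.ofReal_toReal (hfin c)]⟩
  have hTbdd : BddBelow T := ⟨a, fun y hy => hy.1⟩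
  have hTclosed : IsClosed T := by
    rw [hTeq]
    exact isClosed_Ici.inter (isClosed_singleton.preimage hcont)
  have : sInf T ∈ T := hTclosed.csInf_mem hTne hTbdd
  exact ⟨this.1, this.2⟩


noncomputable def P (k : ℕ) : Set ℝ :=
  (cover x l k)ᶜ ∩ Set.Ico (x k) (yend x l k)

theorem measurable_P (k : ℕ) : MeasurableSet (P x l k) :=
  (measurable_cover x l k).compl.inter measurableSet_Ico

theorem volume_P (k : ℕ) (hl0 : 0 ≤ l k) :
    volume (P x l k) = ENNReal.ofReal (l k) := (yend_spec x l k hl0).2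

theorem P_subset_Ico (k : ℕ) : P x l k ⊆ Set.Ico (x k) (yend x l k) :=
  Set.inter_subset_right

theorem Ico_subset_cover_succ (k : ℕ) :
    Set.Ico (x k) (yend x l k) ⊆ cover x l (k + 1) := by
  rw [cover_succ]; exact Set.subset_union_right

theorem P_disjoint {i j : ℕ} (hij : i < j) : Disjoint (P x l i) (P x l j) := by
  rw [Set.disjoint_left]
  intro w hwi hwj
  have h1 : w ∈ cover x l (i + 1) := Ico_subset_cover_succ x l i (P_subset_Ico x l i hwi)
  have h2 : w ∈ cover x l j := cover_mono x l hij h1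
  exact hwj.1 h2

theorem cover_eq_biUnion : ∀ n : ℕ, cover x l n = ⋃ i ∈ Finset.range n, P x l i
  | 0 => by simp [cover_zero]
  | n + 1 => by
    rw [cover_succ, Finset.range_add_one]
    have : cover x l n ∪ Set.Ico (x n) (yend x l n) = cover x l n ∪ P x l n := by
      rw [P]
      ext w
      simp only [Set.mem_union, Set.mem_inter_iff, Set.mem_compl_iff]
      constructor
      · rintro (h | h)
        · exact Or.inl h
        · by_cases hc : w ∈ cover x l n
          · exact Or.inl hc
          · exact Or.inr ⟨hc, h⟩
      · rintro (h | h)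
        · exact Or.inl h
        · exact Or.inr h.2
    rw [this, cover_eq_biUnion n, Finset.set_biUnion_insert, Set.union_comm]

theorem volume_biUnion (F : Finset ℕ) (hl0 : ∀ i, 0 ≤ l i) :
    volume (⋃ i ∈ F, P x l i) = ∑ i ∈ F, ENNReal.ofReal (l i) := by
  rw [measure_biUnion_finset ?_ (fun i _ => measurable_P x l i)]
  · exact Finset.sum_congr rfl fun i _ => volume_P x l i (hl0 i)
  · intro i hi j hj hij
    rcases lt_or_gt_of_ne hij with h | h
    · exact P_disjoint x l h
    · exact (P_disjoint x l h).symm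

end TetrisAux

open TetrisAux

/-- For every `z ∈ ℝ`,
`R^(n)_z = sup{ Σ_{i < n, x_i ∈ [y,z]} l_i - (z - y) : y ≤ z }`. -/
theorem quantity_of_data_eq_sup
    (x l : ℕ → ℝ) (n : ℕ) (hn : 1 ≤ n) (hl : ∀ i, 0 < l i) (z : ℝ) :
    Rq x l n z =
      sSup {v : ℝ | ∃ y ≤ z,
        v = (∑ i ∈ Finset.range n, if y ≤ x i ∧ x i ≤ z then l i else 0)
              - (z - y)} := by

  classical
  set g := gpt ((cover x l n)ᶜ) z with hgdef
  set Sg := {y : ℝ | y ≤ z ∧ y ∈ (cover x l n)ᶜ} with hSgdef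
  have hgS : g = sSup Sg := rfl
  -- Sg is nonempty
  have hrange : (Finset.range n).Nonempty := Finset.nonempty_range_iff.2 (by omega)
  have hSne : Sg.Nonempty := by
    refine ⟨min z ((Finset.range n).inf' hrange x) - 1, ?_, ?_⟩
    · have := min_le_left z ((Finset.range n).inf' hrange x); linarith
    · intro hm
      rw [cover_eq_biUnion] at hm
      obtain ⟨i, hi, hmi⟩ := Set.mem_iUnion₂.1 hm
      have h1 : x i ≤ min z ((Finset.range n).inf' hrange x) - 1 := (P_subset_Ico x l i hmi).1
      have h2 := min_le_right z ((Finset.range n).inf' hrange x)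
      have h3 := Finset.inf'_le x hi
      linarith
  have hSbdd : BddAbove Sg := ⟨z, fun y hy => hy.1⟩
  have hgz : g ≤ z := csSup_le hSne fun y hy => hy.1
  have hle : ∀ w : ℝ, w ∈ (cover x l n)ᶜ → w ≤ z → w ≤ g :=
    fun w h1 h2 => le_csSup hSbdd ⟨h2, h1⟩
  have hyend : ∀ i, i < n → x i < g → yend x l i ≤ g := by
    intro i hin hxg
    by_contra h
    push_neg at h
    obtain ⟨w, hwS, hxw⟩ := exists_lt_of_lt_csSup hSne (hgS ▸ hxg)
    have hwg : w ≤ g := le_csSup hSbdd hwS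
    have hw1 : w ∈ cover x l (i + 1) :=
      Ico_subset_cover_succ x l i ⟨hxw.le, lt_of_le_of_lt hwg h⟩
    exact hwS.2 (cover_mono x l hin hw1)
  have hIoc : Set.Ioc g z ⊆ cover x l n := by
    intro w hw
    by_contra hwC
    exact absurd (hle w hwC hw.2) (not_le.2 hw.1)
  -- the main upper bound
  have hub : ∀ y, y ≤ z →
      (∑ i ∈ Finset.range n, if y ≤ x i ∧ x i ≤ z then l i else 0) - (z - y)
        ≤ (∑ i ∈ Finset.range n, if g ≤ x i ∧ x i ≤ z then l i else 0) - (z - g) := by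
    intro y hyz
    rcases le_or_gt y g with hyg | hgy
    · -- y ≤ g : the files in [y, g) have total length ≤ g - y
      have key : (∑ i ∈ Finset.range n, if y ≤ x i ∧ x i < g then l i else 0) ≤ g - y := by
        set F := (Finset.range n).filter (fun i => y ≤ x i ∧ x i < g) with hF
        have h2 : (⋃ i ∈ F, P x l i) ⊆ Set.Ico y g := by
          refine Set.iUnion₂_subset fun i hi => ?_
          obtain ⟨hi1, hi2, hi3⟩ := Finset.mem_filter.1 hi
          exact (P_subset_Ico x l i).trans
            (Set.Ico_subset_Ico hi2 (hyend i (Finset.mem_range.1 hi1) hi3))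
        have h3 : ∑ i ∈ F, ENNReal.ofReal (l i) ≤ ENNReal.ofReal (g - y) := by
          rw [← volume_biUnion x l F (fun i => (hl i).le), ← Real.volume_Ico]
          exact measure_mono h2
        rw [← ENNReal.ofReal_sum_of_nonneg (fun i _ => (hl i).le),
          ENNReal.ofReal_le_ofReal_iff (by linarith)] at h3
        rwa [Finset.sum_filter] at h3
      have hterm : ∀ i ∈ Finset.range n,
          (if y ≤ x i ∧ x i ≤ z then l i else 0) ≤
            (if g ≤ x i ∧ x i ≤ z then l i else 0)
              + (if y ≤ x i ∧ x i < g then l i else 0) := by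
        intro i _
        have a1 : (0:ℝ) ≤ if g ≤ x i ∧ x i ≤ z then l i else 0 := by
          split <;> simp [(hl i).le]
        have a2 : (0:ℝ) ≤ if y ≤ x i ∧ x i < g then l i else 0 := by
          split <;> simp [(hl i).le]
        by_cases h1 : y ≤ x i ∧ x i ≤ z
        · have e1 : (if y ≤ x i ∧ x i ≤ z then l i else 0) = l i := if_pos h1
          rcases le_or_gt g (x i) with h | h
          · have e2 : (if g ≤ x i ∧ x i ≤ z then l i else 0) = l i := if_pos ⟨h, h1.2⟩
            rw [e1, e2]; linarith
          · have e3 : (if y ≤ x i ∧ x i < g then l i else 0) = l i := if_pos ⟨h1.1, h⟩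
            rw [e1, e3]; linarith
        · have e1 : (if y ≤ x i ∧ x i ≤ z then l i else 0) = 0 := if_neg h1
          rw [e1]; linarith
      have hsum := Finset.sum_le_sum hterm
      rw [Finset.sum_add_distrib] at hsum
      linarith
    · -- g < y : everything in (g, y) is covered by files in [g, y)
      have key2 : y - g ≤ ∑ i ∈ Finset.range n, if g ≤ x i ∧ x i < y then l i else 0 := by
        set F := (Finset.range n).filter (fun i => g ≤ x i ∧ x i < y) with hF
        have h2 : Set.Ioo g y ⊆ ⋃ i ∈ F, P x l i := by
          intro w hw
          have hwC : w ∈ cover x l n := hIoc ⟨hw.1, hw.2.le.trans hyz⟩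
          rw [cover_eq_biUnion] at hwC
          obtain ⟨i, hi, hwPi⟩ := Set.mem_iUnion₂.1 hwC
          have hxiw : x i ≤ w := (P_subset_Ico x l i hwPi).1
          have hgi : g ≤ x i := by
            by_contra hlt
            push_neg at hlt
            have := hyend i (Finset.mem_range.1 hi) hlt
            have hwy : w < yend x l i := (P_subset_Ico x l i hwPi).2
            linarith [hw.1]
          exact Set.mem_biUnion
            (Finset.mem_filter.2 ⟨hi, hgi, lt_of_le_of_lt hxiw hw.2⟩) hwPi
        have h3 : ENNReal.ofReal (y - g) ≤ ∑ i ∈ F, ENNReal.ofReal (l i) := by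
          rw [← volume_biUnion x l F (fun i => (hl i).le), ← Real.volume_Ioo]
          exact measure_mono h2
        rw [← ENNReal.ofReal_sum_of_nonneg (fun i _ => (hl i).le),
          ENNReal.ofReal_le_ofReal_iff (Finset.sum_nonneg fun i _ => (hl i).le)] at h3
        rwa [Finset.sum_filter] at h3
      have hterm2 : ∀ i ∈ Finset.range n,
          (if y ≤ x i ∧ x i ≤ z then l i else 0)
            + (if g ≤ x i ∧ x i < y then l i else 0)
          = (if g ≤ x i ∧ x i ≤ z then l i else 0) := by
        intro i _
        by_cases h1 : g ≤ x i
        · by_cases h2 : x i ≤ z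
          · rcases le_or_gt y (x i) with h3 | h3
            · have e1 : (if y ≤ x i ∧ x i ≤ z then l i else 0) = l i := if_pos ⟨h3, h2⟩
              have e2 : (if g ≤ x i ∧ x i < y then l i else 0) = 0 :=
                if_neg (by rintro ⟨-, hc⟩; linarith)
              have e3 : (if g ≤ x i ∧ x i ≤ z then l i else 0) = l i := if_pos ⟨h1, h2⟩
              rw [e1, e2, e3]; ring
            · have e1 : (if y ≤ x i ∧ x i ≤ z then l i else 0) = 0 :=
                if_neg (by rintro ⟨hc, -⟩; linarith)
              have e2 : (if g ≤ x i ∧ x i < y then l i else 0) = l i := if_pos ⟨h1, h3⟩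
              have e3 : (if g ≤ x i ∧ x i ≤ z then l i else 0) = l i := if_pos ⟨h1, h2⟩
              rw [e1, e2, e3]; ring
          · have e1 : (if y ≤ x i ∧ x i ≤ z then l i else 0) = 0 :=
              if_neg (by rintro ⟨-, hc⟩; exact h2 hc)
            have e2 : (if g ≤ x i ∧ x i < y then l i else 0) = 0 :=
              if_neg (by rintro ⟨-, hc⟩; exact h2 (hc.le.trans hyz))
            have e3 : (if g ≤ x i ∧ x i ≤ z then l i else 0) = 0 :=
              if_neg (by rintro ⟨-, hc⟩; exact h2 hc)
            rw [e1, e2, e3]; ring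
        · have e1 : (if y ≤ x i ∧ x i ≤ z then l i else 0) = 0 :=
            if_neg (by rintro ⟨hc, -⟩; exact h1 (le_trans hgy.le hc))
          have e2 : (if g ≤ x i ∧ x i < y then l i else 0) = 0 :=
            if_neg (by rintro ⟨hc, -⟩; exact h1 hc)
          have e3 : (if g ≤ x i ∧ x i ≤ z then l i else 0) = 0 :=
            if_neg (by rintro ⟨hc, -⟩; exact h1 hc)
          rw [e1, e2, e3]; ring
      have hsum2 := Finset.sum_congr rfl hterm2
      rw [Finset.sum_add_distrib] at hsum2
      linarith
  have hRq : Rq x l n z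
      = (∑ i ∈ Finset.range n, if g ≤ x i ∧ x i ≤ z then l i else 0) - (z - g) := rfl
  set S := {v : ℝ | ∃ y ≤ z,
      v = (∑ i ∈ Finset.range n, if y ≤ x i ∧ x i ≤ z then l i else 0) - (z - y)} with hSdef
  have hmem : Rq x l n z ∈ S := ⟨g, hgz, hRq⟩
  have hub' : ∀ v ∈ S, v ≤ Rq x l n z := by
    rintro v ⟨y, hyz, rfl⟩
    rw [hRq]
    exact hub y hyz
  exact le_antisymm (le_csSup ⟨Rq x l n z, fun v hv => hub' v hv⟩ hmem)
    (csSup_le ⟨Rq x l n z, hmem⟩ hub')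
end

section
/- If lim_{x→−∞} Y_x = +∞, then C = { x ∈ ℝ : Y_x − I_x > 0 } and C ≠ ℝ. -/
open MeasureTheory Filter
open scoped Classical

/-- The process `Y` associated with the whole family of files: `Y_0 = 0` and
`Y_b - Y_a = Σ_{i : x_i ∈ (a,b]} l_i - (b-a)` for `a < b`. -/
noncomputable def Yinf (x l : ℕ → ℝ) (b : ℝ) : ℝ :=
  (∑' i : ℕ, if 0 < x i ∧ x i ≤ b then l i else 0)
    - (∑' i : ℕ, if b < x i ∧ x i ≤ 0 then l i else 0) - b

/-- The infimum process `I_z = inf{ Y_y : y ≤ z }`, with values in `EReal`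
(it may be `-∞`). -/
noncomputable def Iinf (x l : ℕ → ℝ) (z : ℝ) : EReal :=
  ⨅ y ∈ Set.Iic z, (Yinf x l y : EReal)

/-! For the first `n` files put `Y^(n)_t = Σ_{i < n, x_i ≤ t} l_i - t` and let `I^(n)` be its
running infimum. `I^(n)` is continuous, constant off the free set `{Y^(n) = I^(n)}` and
decreasing at unit speed on it, so the free part of `[a, b)` has measure `I^(n)_a - I^(n)_b`.
Hence storing file `k` covers `[x_k, y)` with `y` the first time after `x_k` at which `I^(k)`
has dropped by `l_k`, and this is exactly what adding the jump `l_k` at `x_k` does to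
`{I < Y}`: by induction `C^(n) = {I^(n) < Y^(n)} = {z | ∃ y ≤ z, Y^(n)_y < Y^(n)_z}`.
As `n → ∞` the increment `Y^(n)_z - Y^(n)_y` increases to `Y_z - Y_y`, which gives
`C = {I < Y}`. Finally `Y + id` is nondecreasing and `Y → +∞` at `-∞`, so some `u` has
`Y_u ≤ Y_y` for all `y ≤ u`, and `u ∉ C`. -/

open Set

theorem Set.Finite.interval_induction {S : Set ℝ} (hS : S.Finite) {P : ℝ → ℝ → Prop}
    (gap : ∀ a b, a ≤ b → (∀ c ∈ S, c ∉ Ioo a b) → P a b)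
    (split : ∀ a c b, c ∈ Ioo a b → P a c → P c b → P a b) {a b : ℝ} (hab : a ≤ b) :
    P a b := by
  induction hk : (S ∩ Ioo a b).ncard using Nat.strong_induction_on generalizing a b with
  | _ k ih =>
  rcases (S ∩ Ioo a b).eq_empty_or_nonempty with h | ⟨c, hcS, hc⟩
  · exact gap a b hab fun c hcS hc => h.subset ⟨hcS, hc⟩
  · have fewer : ∀ {a' b'}, Ioo a' b' ⊆ Ioo a b → c ∉ Ioo a' b' →
        (S ∩ Ioo a' b').ncard < k :=
      fun hsub hc' => hk ▸ Set.ncard_lt_ncard ((ssubset_iff_of_subset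
        (inter_subset_inter_right S hsub)).2 ⟨c, ⟨hcS, hc⟩, fun h => hc' h.2⟩)
        (hS.subset inter_subset_left)
    exact split a c b hc
      (ih _ (fewer (Ioo_subset_Ioo_right hc.2.le) fun h => h.2.false) hc.1.le rfl)
      (ih _ (fewer (Ioo_subset_Ioo_left hc.1.le) fun h => h.1.false) hc.2.le rfl)

theorem MeasureTheory.measure_inter_Ico_add (μ : Measure ℝ) (s : Set ℝ) {a b c : ℝ}
    (hac : a ≤ c) (hcb : c ≤ b) :
    μ (s ∩ Ico a c) + μ (s ∩ Ico c b) = μ (s ∩ Ico a b) := by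
  rw [← measure_inter_add_sdiff (s ∩ Ico a b) (measurableSet_Ico (a := a) (b := c))]
  congr 2 <;> ext t <;> simp only [mem_inter_iff, Set.mem_sdiff, mem_Ico] <;> grind

theorem Antitone.csInf_level_le_iff {f : ℝ → ℝ} (hf : Antitone f) (hfc : Continuous f)
    {a c z : ℝ} (hca : c ≤ f a) (hc : ∃ b, f b ≤ c) (haz : a ≤ z) :
    sInf {y | a ≤ y ∧ f y = c} ≤ z ↔ f z ≤ c := by
  set T := {y | a ≤ y ∧ f y = c}
  have hT : BddBelow T := ⟨a, fun y hy => hy.1⟩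
  have reach : ∀ b, a ≤ b → f b ≤ c → ∃ y ∈ T, y ≤ b := fun b hab hb => by
    obtain ⟨y, hy, hyc⟩ := intermediate_value_Icc' hab hfc.continuousOn ⟨hb, hca⟩
    exact ⟨y, ⟨hy.1, hyc⟩, hy.2⟩
  constructor
  · intro hz
    obtain ⟨b, hb⟩ := hc
    obtain ⟨y, hyT, -⟩ := reach (max a b) (le_max_left a b) ((hf (le_max_right a b)).trans hb)
    have hmem : sInf T ∈ T :=
      (isClosed_Ici.inter (isClosed_eq hfc continuous_const)).csInf_mem ⟨y, hyT⟩ hT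
    exact hmem.2 ▸ hf hz
  · intro hz
    obtain ⟨y, hyT, hyz⟩ := reach z haz hz
    exact (csInf_le hT hyT).trans hyz

theorem exists_forall_le_of_monotone_add {f : ℝ → ℝ} (hf : Monotone fun t => f t + t)
    (hlim : Tendsto f atBot atTop) : ∃ u, ∀ y ≤ u, f u ≤ f y := by
  set S := {y | f y ≤ f 0}
  obtain ⟨A, hA⟩ := eventually_atBot.1 (hlim.eventually_gt_atTop (f 0))
  have hS : BddBelow S := ⟨A, fun y hy => le_of_not_gt fun h => (hA y h.le).not_ge hy⟩
  have hu : f (sInf S) ≤ f 0 := by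
    refine le_of_forall_pos_le_add fun ε hε => ?_
    obtain ⟨y, hyS, hy⟩ :=
      exists_lt_of_csInf_lt (s := S) ⟨0, le_refl (f 0)⟩ (lt_add_of_pos_right (sInf S) hε)
    have := hf (csInf_le hS hyS)
    simp only at this
    linarith [show f y ≤ f 0 from hyS]
  refine ⟨sInf S, fun y hy => ?_⟩
  rcases hy.lt_or_eq with hy | rfl
  · exact hu.trans (le_of_lt (not_le.1 fun h => (csInf_le hS h).not_gt hy))
  · exact le_rfl

theorem biInf_Iic_coe_lt_coe_iff (f : ℝ → ℝ) (z : ℝ) :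
    (⨅ y ∈ Iic z, (f y : EReal)) < f z ↔ ∃ y ≤ z, f y < f z := by
  simp only [iInf_lt_iff, mem_Iic, EReal.coe_lt_coe_iff, exists_prop]

-- Unlike `Yinf`, not normalised by `Y_0 = 0`: only the increments matter.
noncomputable def Yfin (x l : ℕ → ℝ) (n : ℕ) (t : ℝ) : ℝ :=
  (∑ i ∈ Finset.range n, if x i ≤ t then l i else 0) - t

noncomputable def Ifin (x l : ℕ → ℝ) (n : ℕ) (t : ℝ) : ℝ :=
  sInf (Yfin x l n '' Iic t)

section Finite

variable {x l : ℕ → ℝ} {n : ℕ}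

theorem Yfin_succ (k : ℕ) (t : ℝ) :
    Yfin x l (k + 1) t = Yfin x l k t + if x k ≤ t then l k else 0 := by
  simp only [Yfin, Finset.sum_range_succ]
  ring

theorem Yfin_of_no_jump {a b t : ℝ} (hjump : ∀ i < n, x i ∉ Ioo a b) (ht : t ∈ Ico a b) :
    Yfin x l n t = Yfin x l n a - (t - a) := by
  have hsum : (∑ i ∈ Finset.range n, if x i ≤ t then l i else 0) =
      ∑ i ∈ Finset.range n, if x i ≤ a then l i else 0 := by
    refine Finset.sum_congr rfl fun i hi => if_congr ?_ rfl rfl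
    exact ⟨fun hit => not_lt.1 fun hai =>
      hjump i (Finset.mem_range.1 hi) ⟨hai, hit.trans_lt ht.2⟩, fun hia => hia.trans ht.1⟩
  simp only [Yfin, hsum]
  ring

variable (hl : ∀ i, 0 ≤ l i)
include hl

theorem Yfin_add_monotone : Monotone fun t => Yfin x l n t + t := fun s t hst => by
  simp only [Yfin, sub_add_cancel]
  exact Finset.sum_le_sum fun i _ => by
    split_ifs with hs ht
    exacts [le_rfl, absurd (hs.trans hst) ht, hl i, le_rfl]

theorem sub_le_Yfin {s t : ℝ} (hst : s ≤ t) : Yfin x l n s - (t - s) ≤ Yfin x l n t := by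
  linarith [Yfin_add_monotone (x := x) (n := n) hl hst]

theorem bddBelow_Yfin_image_Iic (t : ℝ) : BddBelow (Yfin x l n '' Iic t) := by
  refine ⟨-t, forall_mem_image.2 fun y hy => ?_⟩
  have : 0 ≤ ∑ i ∈ Finset.range n, if x i ≤ y then l i else 0 :=
    Finset.sum_nonneg fun i _ => by split_ifs <;> simp [hl i]
  simp only [Yfin]
  linarith [mem_Iic.1 hy]

theorem le_Ifin_iff {c t : ℝ} : c ≤ Ifin x l n t ↔ ∀ y ≤ t, c ≤ Yfin x l n y := by
  rw [Ifin, le_csInf_iff (bddBelow_Yfin_image_Iic hl t) (nonempty_Iic.image _),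
    forall_mem_image]
  rfl

theorem Ifin_le_Yfin {y t : ℝ} (hyt : y ≤ t) : Ifin x l n t ≤ Yfin x l n y :=
  (le_Ifin_iff hl).1 le_rfl y hyt

theorem Ifin_lt_Yfin_iff {t : ℝ} :
    Ifin x l n t < Yfin x l n t ↔ ∃ y ≤ t, Yfin x l n y < Yfin x l n t := by
  simp only [← not_le, le_Ifin_iff hl, not_forall, exists_prop]

theorem Ifin_antitone : Antitone (Ifin x l n) := fun _ _ hst =>
  (le_Ifin_iff hl).2 fun _ hy => Ifin_le_Yfin hl (hy.trans hst)

theorem Ifin_le_Ifin_add {s t : ℝ} (hst : s ≤ t) : Ifin x l n s ≤ Ifin x l n t + (t - s) := by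
  rw [← sub_le_iff_le_add, le_Ifin_iff hl]
  intro y hyt
  rcases le_total y s with hys | hsy
  · linarith [Ifin_le_Yfin (x := x) (n := n) hl hys]
  · linarith [Ifin_le_Yfin (x := x) (n := n) hl (le_refl s), sub_le_Yfin (x := x) (n := n) hl hsy]

theorem Ifin_continuous : Continuous (Ifin x l n) := by
  refine (LipschitzWith.of_le_add fun s t => ?_).continuous
  rw [Real.dist_eq]
  rcases le_total s t with hst | hts
  · linarith [Ifin_le_Ifin_add (x := x) (n := n) hl hst, neg_abs_le (s - t)]
  · linarith [Ifin_antitone (x := x) (n := n) hl hts, abs_nonneg (s - t)]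

theorem le_Ifin_of_forall_lt {c t : ℝ} (h : ∀ y < t, c ≤ Yfin x l n y) :
    c ≤ Ifin x l n t := by
  refine le_of_forall_pos_le_add fun ε hε => ?_
  have : c ≤ Ifin x l n (t - ε) := (le_Ifin_iff hl).2 fun y hy => h y (by linarith)
  linarith [Ifin_le_Ifin_add (x := x) (n := n) hl (sub_le_self t hε.le)]

theorem exists_Ifin_le (c : ℝ) : ∃ b, Ifin x l n b ≤ c := by
  set L := ∑ i ∈ Finset.range n, l i
  refine ⟨L - c, (Ifin_le_Yfin hl le_rfl).trans ?_⟩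
  have : (∑ i ∈ Finset.range n, if x i ≤ L - c then l i else 0) ≤ L :=
    Finset.sum_le_sum fun i _ => by split_ifs <;> simp [hl i]
  simp only [Yfin]
  linarith

theorem volume_setOf_Yfin_le_Ifin_inter_Ico_of_no_jump {a b : ℝ}
    (hab : a ≤ b) (hjump : ∀ i < n, x i ∉ Ioo a b) :
    volume ({t | Yfin x l n t ≤ Ifin x l n t} ∩ Ico a b) =
      ENNReal.ofReal (Ifin x l n a - Ifin x l n b) := by
  set Y := Yfin x l n
  set I := Ifin x l n
  have hlin : ∀ t ∈ Ico a b, Y t = Y a - (t - a) := fun t ht => Yfin_of_no_jump hjump ht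
  have hIa : I a ≤ Y a := Ifin_le_Yfin hl le_rfl
  -- on `[a, b)` the process runs down at unit speed, so `t` is free once `Y t` reaches `I a`
  have hfree : ∀ t ∈ Ico a b, Y t ≤ I t ↔ Y t ≤ I a := fun t ht =>
    ⟨fun h => h.trans (Ifin_antitone hl ht.1), fun h => (le_Ifin_iff hl).2 fun y hyt => by
      rcases le_total y a with hya | hay
      · exact h.trans (Ifin_le_Yfin hl hya)
      · show Y t ≤ Y y
        rw [hlin y ⟨hay, hyt.trans_lt ht.2⟩, hlin t ht]
        linarith⟩
  have hset : {t | Y t ≤ I t} ∩ Ico a b = Ico (a + (Y a - I a)) b := by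
    ext t
    simp only [mem_inter_iff, mem_ofPred_eq, mem_Ico]
    constructor
    · rintro ⟨h, ht⟩
      rw [hfree t ht, hlin t ht] at h
      exact ⟨by linarith, ht.2⟩
    · rintro ⟨h, htb⟩
      have ht : a ≤ t ∧ t < b := ⟨by linarith, htb⟩
      rw [hfree t ht, hlin t ht]
      exact ⟨by linarith, ht⟩
  have hIb : I b = min (I a) (Y a - (b - a)) := by
    refine le_antisymm (le_min (Ifin_antitone hl hab) ?_) ((le_Ifin_iff hl).2 fun y hyb => ?_)
    · suffices b ≤ Y a + a - I b by linarith
      refine le_of_forall_lt_imp_le_of_dense fun t htb => ?_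
      rcases lt_or_ge t a with hta | hat
      · linarith [Ifin_antitone (x := x) (n := n) hl hab]
      · have hIt : I b ≤ Y t := (Ifin_antitone hl htb.le).trans (Ifin_le_Yfin hl le_rfl)
        linarith [hlin t ⟨hat, htb⟩]
    · rcases le_total y a with hya | hay
      · exact (min_le_left _ _).trans (Ifin_le_Yfin hl hya)
      · linarith [min_le_right (I a) (Y a - (b - a)), sub_le_Yfin (x := x) (n := n) hl hay]
  rw [hset, Real.volume_Ico, hIb]
  rcases le_total (I a) (Y a - (b - a)) with h | h
  · rw [min_eq_left h, sub_self, ENNReal.ofReal_zero, ENNReal.ofReal_of_nonpos (by linarith)]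
  · rw [min_eq_right h]
    ring_nf

theorem volume_setOf_Yfin_le_Ifin_inter_Ico {a b : ℝ} (hab : a ≤ b) :
    volume ({t | Yfin x l n t ≤ Ifin x l n t} ∩ Ico a b) =
      ENNReal.ofReal (Ifin x l n a - Ifin x l n b) := by
  refine ((Finset.range n).image x).finite_toSet.interval_induction
    (fun a b hab hgap => volume_setOf_Yfin_le_Ifin_inter_Ico_of_no_jump hl hab fun i hi =>
      hgap (x i) (Finset.mem_image_of_mem x (Finset.mem_range.2 hi)))
    (fun a c b hc hac hcb => ?_) hab
  rw [← measure_inter_Ico_add volume _ hc.1.le hc.2.le, hac, hcb,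
    ← ENNReal.ofReal_add (sub_nonneg.2 (Ifin_antitone hl hc.1.le))
      (sub_nonneg.2 (Ifin_antitone hl hc.2.le))]
  ring_nf

theorem Yfin_succ_le_Ifin_succ_iff {k : ℕ} {z : ℝ} (hz : x k ≤ z) :
    Yfin x l (k + 1) z ≤ Ifin x l (k + 1) z ↔
      Yfin x l k z ≤ Ifin x l k z ∧ Ifin x l k z ≤ Ifin x l k (x k) - l k := by
  simp only [le_Ifin_iff hl, Yfin_succ, if_pos hz]
  constructor
  · intro h
    have hfree : ∀ y ≤ z, Yfin x l k z ≤ Yfin x l k y := fun y hy => by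
      have := h y hy
      split_ifs at this <;> linarith [hl k]
    have hbefore : Yfin x l k z + l k ≤ Ifin x l k (x k) :=
      le_Ifin_of_forall_lt hl fun y hy => by
        simpa only [if_neg hy.not_ge, add_zero] using h y (hy.le.trans hz)
    exact ⟨hfree, by linarith [Ifin_le_Yfin (x := x) (n := k) hl (le_refl z)]⟩
  · rintro ⟨hfree, hI⟩ y hy
    split_ifs with hxy
    · linarith [hfree y hy]
    · have hzI : Yfin x l k z ≤ Ifin x l k z := (le_Ifin_iff hl).2 hfree
      linarith [Ifin_le_Yfin (x := x) (n := k) hl (not_le.1 hxy).le]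

theorem setOf_Ifin_lt_Yfin_succ (k : ℕ) :
    {z | Ifin x l (k + 1) z < Yfin x l (k + 1) z} =
      {z | Ifin x l k z < Yfin x l k z} ∪
        Ico (x k) (sInf {y | x k ≤ y ∧ Ifin x l k y = Ifin x l k (x k) - l k}) := by
  ext z
  rcases lt_or_ge z (x k) with hz | hz
  · simp only [mem_union, mem_ofPred_eq, mem_Ico, hz.not_ge, false_and, or_false,
      Ifin_lt_Yfin_iff hl]
    refine exists_congr fun y => and_congr_right fun hy => ?_
    simp only [Yfin_succ, if_neg hz.not_ge, if_neg (hy.trans_lt hz).not_ge, add_zero]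
  · rw [← not_iff_not]
    simp only [mem_union, mem_ofPred_eq, mem_Ico, not_or, not_lt, not_and, hz, true_imp_iff]
    rw [Yfin_succ_le_Ifin_succ_iff hl hz, (Ifin_antitone hl).csInf_level_le_iff
      (Ifin_continuous hl) (by linarith [hl k]) (exists_Ifin_le hl _) hz]

theorem cover_eq_setOf_Ifin_lt_Yfin (n : ℕ) :
    cover x l n = {z | Ifin x l n z < Yfin x l n z} := by
  induction n with
  | zero =>
    ext z
    simp only [cover, mem_empty_iff_false, mem_ofPred_eq, Ifin_lt_Yfin_iff hl, false_iff,
      not_exists, not_and, not_lt]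
    intro y hy
    simpa [Yfin] using hy
  | succ k ih =>
    have hlevel : {y | x k ≤ y ∧
        volume ((cover x l k)ᶜ ∩ Ico (x k) y) = ENNReal.ofReal (l k)} =
        {y | x k ≤ y ∧ Ifin x l k y = Ifin x l k (x k) - l k} := by
      ext y
      refine and_congr_right fun hy => ?_
      simp only [ih, compl_ofPred, not_lt]
      rw [volume_setOf_Yfin_le_Ifin_inter_Ico hl hy, ENNReal.ofReal_eq_ofReal_iff
        (sub_nonneg.2 (Ifin_antitone hl hy)) (hl k)]
      constructor <;> intro h <;> linarith
    rw [setOf_Ifin_lt_Yfin_succ hl, ← ih, cover, hlevel]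

end Finite

noncomputable def lengthIn (x l : ℕ → ℝ) (a b : ℝ) (i : ℕ) : ℝ :=
  if a < x i ∧ x i ≤ b then l i else 0

section Infinite

variable {x l : ℕ → ℝ}

theorem Yfin_sub_Yfin (n : ℕ) {a b : ℝ} (hab : a ≤ b) :
    Yfin x l n b - Yfin x l n a = ∑ i ∈ Finset.range n, lengthIn x l a b i - (b - a) := by
  simp only [Yfin, lengthIn]
  rw [sub_sub_sub_comm, ← Finset.sum_sub_distrib]
  congr 2 with i
  split_ifs <;> grind

variable (hl : ∀ i, 0 ≤ l i)
include hl

theorem lengthIn_nonneg (a b : ℝ) (i : ℕ) : 0 ≤ lengthIn x l a b i := by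
  unfold lengthIn
  split_ifs
  exacts [hl i, le_rfl]

variable (hsum : ∀ L : ℝ, 0 ≤ L →
  Summable (fun i : ℕ => if x i ∈ Icc (-L) L then l i else 0))
include hsum

theorem summable_lengthIn (a b : ℝ) : Summable (lengthIn x l a b) := by
  set L := max |a| |b|
  refine .of_nonneg_of_le (lengthIn_nonneg hl a b) (fun i => ?_) (hsum L (by positivity))
  unfold lengthIn
  split_ifs with hab hL
  · exact le_rfl
  · exact absurd ⟨by linarith [neg_abs_le a, le_max_left |a| |b|],
      by linarith [le_abs_self b, le_max_right |a| |b|]⟩ hL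
  · exact hl i
  · exact le_rfl

theorem Yinf_sub_Yinf {a b : ℝ} (hab : a ≤ b) :
    Yinf x l b - Yinf x l a = ∑' i, lengthIn x l a b i - (b - a) := by
  have hsplit : ∀ i, lengthIn x l a b i =
      (lengthIn x l 0 b i - lengthIn x l b 0 i) - (lengthIn x l 0 a i - lengthIn x l a 0 i) := by
    intro i
    simp only [lengthIn]
    split_ifs <;> grind
  have hs := summable_lengthIn hl hsum
  rw [tsum_congr hsplit, ((hs 0 b).sub (hs b 0)).tsum_sub ((hs 0 a).sub (hs a 0)),
    (hs 0 b).tsum_sub (hs b 0), (hs 0 a).tsum_sub (hs a 0)]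
  simp only [Yinf, lengthIn]
  ring

theorem Yinf_add_monotone : Monotone fun t => Yinf x l t + t := fun a b hab => by
  have := Yinf_sub_Yinf hl hsum hab
  have : 0 ≤ ∑' i, lengthIn x l a b i := tsum_nonneg (lengthIn_nonneg hl a b)
  simp only
  linarith

theorem Yinf_lt_Yinf_iff_exists_Yfin {a b : ℝ} (hab : a ≤ b) :
    Yinf x l a < Yinf x l b ↔ ∃ n, Yfin x l n a < Yfin x l n b := by
  have hfin : ∀ n, Yfin x l n a < Yfin x l n b ↔
      b - a < ∑ i ∈ Finset.range n, lengthIn x l a b i :=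
    fun n => by rw [← sub_pos, Yfin_sub_Yfin n hab, sub_pos]
  rw [← sub_pos, Yinf_sub_Yinf hl hsum hab, sub_pos]
  simp only [hfin]
  have hs := summable_lengthIn hl hsum a b
  constructor
  · intro h
    exact (hs.hasSum.tendsto_sum_nat.eventually (lt_mem_nhds h)).exists
  · rintro ⟨n, hn⟩
    exact hn.trans_le (hs.sum_le_tsum _ fun i _ => lengthIn_nonneg hl a b i)

end Infinite

/-- If `Y_x → +∞` as `x → -∞`, then `C = { x ∈ ℝ : Y_x - I_x > 0 }` and `C ≠ ℝ`,
where `C = ∪_n C^(n)`. -/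
theorem cover_of_tendsto_atTop
    (x l : ℕ → ℝ) (hl : ∀ i, 0 < l i)
    (hsum : ∀ L : ℝ, 0 ≤ L →
      Summable (fun i : ℕ => if x i ∈ Set.Icc (-L) L then l i else 0))
    (hY : Tendsto (Yinf x l) atBot atTop) :
    (⋃ n : ℕ, cover x l n) = {z : ℝ | Iinf x l z < (Yinf x l z : EReal)} ∧
      (⋃ n : ℕ, cover x l n) ≠ Set.univ := by
  have hl' : ∀ i, 0 ≤ l i := fun i => (hl i).le
  have hC : (⋃ n, cover x l n) = {z | Iinf x l z < Yinf x l z} := by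
    ext z
    simp only [mem_iUnion, cover_eq_setOf_Ifin_lt_Yfin hl', mem_ofPred_eq, Ifin_lt_Yfin_iff hl',
      Iinf, biInf_Iic_coe_lt_coe_iff]
    constructor
    · rintro ⟨n, y, hyz, hlt⟩
      exact ⟨y, hyz, (Yinf_lt_Yinf_iff_exists_Yfin hl' hsum hyz).2 ⟨n, hlt⟩⟩
    · rintro ⟨y, hyz, hlt⟩
      obtain ⟨n, hn⟩ := (Yinf_lt_Yinf_iff_exists_Yfin hl' hsum hyz).1 hlt
      exact ⟨n, y, hyz, hn⟩
  obtain ⟨u, hu⟩ := exists_forall_le_of_monotone_add (Yinf_add_monotone hl' hsum) hY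
  refine ⟨hC, ne_univ_iff_exists_notMem _ |>.2 ⟨u, ?_⟩⟩
  simp only [hC, mem_ofPred_eq, Iinf, biInf_Iic_coe_lt_coe_iff, not_exists, not_and, not_lt]
  exact hu
end

section
/- If liminf_{x→−∞} Y_x = −∞, then C = { x ∈ ℝ : Y_x − I_x > 0 } = ℝ. -/
open MeasureTheory Filter
open scoped Classical

lemma cover_measurable (x l : ℕ → ℝ) : ∀ n, MeasurableSet (cover x l n)
  | 0 => MeasurableSet.empty
  | n + 1 => ((cover_measurable x l n).union measurableSet_Ico)

lemma cover_volume_ne_top (x l : ℕ → ℝ) : ∀ n, volume (cover x l n) ≠ ⊤ := by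
  intro n
  induction n with
  | zero => simp [cover]
  | succ k ih =>
      have h := measure_union_le (μ := volume) (cover x l k) (Set.Ico (x k)
        (sInf {y : ℝ | x k ≤ y ∧
            volume ((cover x l k)ᶜ ∩ Set.Ico (x k) y) = ENNReal.ofReal (l k)}))
      have : volume (cover x l (k+1)) ≤ volume (cover x l k) + volume (Set.Ico (x k)
        (sInf {y : ℝ | x k ≤ y ∧
            volume ((cover x l k)ᶜ ∩ Set.Ico (x k) y) = ENNReal.ofReal (l k)})) := h
      have h2 : volume (cover x l k) + volume (Set.Ico (x k)
        (sInf {y : ℝ | x k ≤ y ∧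
            volume ((cover x l k)ᶜ ∩ Set.Ico (x k) y) = ENNReal.ofReal (l k)})) < ⊤ := by
        rw [ENNReal.add_lt_top]
        exact ⟨ih.lt_top, by rw [Real.volume_Ico]; exact ENNReal.ofReal_lt_top⟩
      exact (lt_of_le_of_lt this h2).ne

lemma cover_mono (x l : ℕ → ℝ) : Monotone (cover x l) :=
  monotone_nat_of_le_succ fun n => by
    intro t ht
    exact Set.mem_union_left _ ht

lemma ysInf_spec (x l : ℕ → ℝ) (k : ℕ) (hlk : 0 < l k) :
    x k ≤ sInf {y : ℝ | x k ≤ y ∧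
        volume ((cover x l k)ᶜ ∩ Set.Ico (x k) y) = ENNReal.ofReal (l k)} ∧
      volume ((cover x l k)ᶜ ∩ Set.Ico (x k)
        (sInf {y : ℝ | x k ≤ y ∧
          volume ((cover x l k)ᶜ ∩ Set.Ico (x k) y) = ENNReal.ofReal (l k)}))
        = ENNReal.ofReal (l k) := by
  have g_ne_top : ∀ y : ℝ, volume ((cover x l k)ᶜ ∩ Set.Ico (x k) y) ≠ ⊤ := by
    intro y
    have h : volume ((cover x l k)ᶜ ∩ Set.Ico (x k) y) ≤ volume (Set.Ico (x k) y) :=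
      measure_mono Set.inter_subset_right
    rw [Real.volume_Ico] at h
    exact (lt_of_le_of_lt h ENNReal.ofReal_lt_top).ne
  set g : ℝ → ENNReal := fun y => volume ((cover x l k)ᶜ ∩ Set.Ico (x k) y) with hgdef
  set G : ℝ → ℝ := fun y => (g y).toReal with hGdef
  have gmono : ∀ {u v : ℝ}, u ≤ v → g u ≤ g v := fun h =>
    measure_mono (Set.inter_subset_inter_right _ (Set.Ico_subset_Ico_right h))
  have glip : ∀ {u v : ℝ}, u ≤ v → g v ≤ g u + ENNReal.ofReal (v - u) := by
    intro u v huv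
    have hsub : (cover x l k)ᶜ ∩ Set.Ico (x k) v ⊆
        ((cover x l k)ᶜ ∩ Set.Ico (x k) u) ∪ Set.Ico u v := by
      rintro t ⟨ht1, ht2, ht3⟩
      rcases lt_or_ge t u with h | h
      · exact Or.inl ⟨ht1, ht2, h⟩
      · exact Or.inr ⟨h, ht3⟩
    calc g v ≤ volume (((cover x l k)ᶜ ∩ Set.Ico (x k) u) ∪ Set.Ico u v) :=
          measure_mono hsub
      _ ≤ g u + volume (Set.Ico u v) := measure_union_le _ _
      _ = g u + ENNReal.ofReal (v - u) := by rw [Real.volume_Ico]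
  have Gmono : ∀ {u v : ℝ}, u ≤ v → G u ≤ G v := fun h =>
    ENNReal.toReal_mono (g_ne_top _) (gmono h)
  have Glip : ∀ {u v : ℝ}, u ≤ v → G v ≤ G u + (v - u) := by
    intro u v huv
    have h2 := ENNReal.toReal_mono
      (ENNReal.add_ne_top.2 ⟨g_ne_top u, ENNReal.ofReal_ne_top⟩) (glip huv)
    rw [ENNReal.toReal_add (g_ne_top u) ENNReal.ofReal_ne_top,
      ENNReal.toReal_ofReal (by linarith)] at h2
    exact h2
  have Gcont : Continuous G := by
    apply LipschitzWith.continuous (K := 1)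
    apply LipschitzWith.of_dist_le_mul
    intro u v
    simp only [NNReal.coe_one, one_mul, Real.dist_eq]
    rcases le_total u v with h | h
    · rw [abs_of_nonpos (sub_nonpos.2 (Gmono h)), abs_of_nonpos (sub_nonpos.2 h)]
      have := Glip h; linarith
    · rw [abs_of_nonneg (sub_nonneg.2 (Gmono h)), abs_of_nonneg (sub_nonneg.2 h)]
      have := Glip h; linarith
  have Gzero : G (x k) = 0 := by
    simp [hGdef, hgdef]
  have hub : ∀ y : ℝ, x k ≤ y → y - x k ≤ G y + (volume (cover x l k)).toReal := by
    intro y hy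
    have hsub : Set.Ico (x k) y ⊆ ((cover x l k)ᶜ ∩ Set.Ico (x k) y) ∪ cover x l k := by
      intro t ht
      by_cases hmem : t ∈ cover x l k
      · exact Or.inr hmem
      · exact Or.inl ⟨hmem, ht⟩
    have h1 : volume (Set.Ico (x k) y) ≤ g y + volume (cover x l k) :=
      le_trans (measure_mono hsub) (measure_union_le _ _)
    rw [Real.volume_Ico] at h1
    have h2 := ENNReal.toReal_mono
      (ENNReal.add_ne_top.2 ⟨g_ne_top y, cover_volume_ne_top x l k⟩) h1
    rw [ENNReal.toReal_ofReal (by linarith),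
      ENNReal.toReal_add (g_ne_top y) (cover_volume_ne_top x l k)] at h2
    exact h2
  set Yb : ℝ := x k + (volume (cover x l k)).toReal + l k with hYbdef
  have hYb : x k ≤ Yb := by
    have := ENNReal.toReal_nonneg (a := volume (cover x l k))
    rw [hYbdef]; linarith
  have hGYb : l k ≤ G Yb := by
    have := hub Yb hYb
    rw [hYbdef] at this ⊢
    linarith
  obtain ⟨y0, hy0, hGy0⟩ := intermediate_value_Icc hYb Gcont.continuousOn
    ⟨by rw [Gzero]; exact hlk.le, hGYb⟩
  have hSG : {y : ℝ | x k ≤ y ∧ g y = ENNReal.ofReal (l k)} =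
      {y : ℝ | x k ≤ y} ∩ G ⁻¹' {l k} := by
    ext y
    simp only [Set.mem_setOf_eq, Set.mem_inter_iff, Set.mem_preimage,
      Set.mem_singleton_iff]
    constructor
    · rintro ⟨h1, h2⟩
      refine ⟨h1, ?_⟩
      rw [hGdef]
      simp only
      rw [h2, ENNReal.toReal_ofReal hlk.le]
    · rintro ⟨h1, h2⟩
      refine ⟨h1, ?_⟩
      have hne : g y ≠ ⊤ := g_ne_top y
      rw [← ENNReal.ofReal_toReal hne]
      exact congrArg ENNReal.ofReal h2
  have hclosed : IsClosed {y : ℝ | x k ≤ y ∧ g y = ENNReal.ofReal (l k)} := by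
    rw [hSG]
    exact (isClosed_le continuous_const continuous_id).inter
      (isClosed_singleton.preimage Gcont)
  have hne : Set.Nonempty {y : ℝ | x k ≤ y ∧ g y = ENNReal.ofReal (l k)} := by
    refine ⟨y0, hy0.1, ?_⟩
    have hne : g y0 ≠ ⊤ := g_ne_top y0
    rw [← ENNReal.ofReal_toReal hne]
    exact congrArg ENNReal.ofReal hGy0
  have hbdd : BddBelow {y : ℝ | x k ≤ y ∧ g y = ENNReal.ofReal (l k)} :=
    ⟨x k, fun y hy => hy.1⟩
  have hmem := hclosed.csInf_mem hne hbdd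
  exact ⟨hmem.1, hmem.2⟩

lemma summable_band (x l : ℕ → ℝ) (hl : ∀ i, 0 < l i)
    (hsum : ∀ L : ℝ, 0 ≤ L →
      Summable (fun i : ℕ => if x i ∈ Set.Icc (-L) L then l i else 0))
    (a c : ℝ) :
    Summable (fun i : ℕ => if a < x i ∧ x i ≤ c then l i else 0) := by
  set L : ℝ := max (max (-a) c) 0 with hL
  have hL0 : 0 ≤ L := le_max_right _ _
  refine Summable.of_nonneg_of_le (fun i => ?_) (fun i => ?_) (hsum L hL0)
  · split_ifs
    · exact (hl i).le
    · exact le_rfl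
  · by_cases h : a < x i ∧ x i ≤ c
    · rw [if_pos h, if_pos]
      refine ⟨?_, ?_⟩
      · have : -L ≤ a := by
          have h1 : -a ≤ L := le_trans (le_max_left _ _) (le_max_left _ _)
          linarith
        linarith [h.1]
      · exact le_trans h.2 (le_trans (le_max_right _ _) (le_max_left _ _))
    · rw [if_neg h]
      split_ifs
      · exact (hl i).le
      · exact le_rfl

lemma band_identity (x l : ℕ → ℝ) (b z : ℝ) (hb0 : b ≤ 0) (hbz : b < z) (i : ℕ) :
    (if b < x i ∧ x i ≤ z then l i else 0) + (if z < x i ∧ x i ≤ 0 then l i else 0) =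
      (if 0 < x i ∧ x i ≤ z then l i else 0) + (if b < x i ∧ x i ≤ 0 then l i else 0) := by
  rcases le_or_gt (x i) b with h1 | h1 <;>
    rcases le_or_gt (x i) z with h2 | h2 <;>
    rcases le_or_gt (x i) 0 with h3 | h3 <;>
    split_ifs <;> simp_all <;> linarith

/-- If `liminf_{x → -∞} Y_x = -∞` (i.e. `Y` drops below any level frequently at `-∞`),
then `C = { x ∈ ℝ : Y_x - I_x > 0 } = ℝ`, where `C = ∪_n C^(n)`. -/
theorem cover_of_liminf_bot
    (x l : ℕ → ℝ) (hl : ∀ i, 0 < l i)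
    (hsum : ∀ L : ℝ, 0 ≤ L →
      Summable (fun i : ℕ => if x i ∈ Set.Icc (-L) L then l i else 0))
    (hY : ∀ M : ℝ, ∃ᶠ b in atBot, Yinf x l b < M) :
    (⋃ n : ℕ, cover x l n) = Set.univ ∧
      {z : ℝ | Iinf x l z < (Yinf x l z : EReal)} = Set.univ := by
  constructor
  · ext z
    simp only [Set.mem_iUnion, Set.mem_univ, iff_true]
    by_contra hz
    push_neg at hz
    obtain ⟨b, hble, hYblt⟩ := frequently_atBot.mp (hY (Yinf x l z)) (-|z| - 1)
    have hb0 : b ≤ 0 := by have := abs_nonneg z; linarith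
    have hbz : b < z := by have := neg_abs_le z; linarith
    have hfS := summable_band x l hl hsum b z
    have hfBz := summable_band x l hl hsum z 0
    have hfAz := summable_band x l hl hsum 0 z
    have hfBb := summable_band x l hl hsum b 0
    have hkey : (∑' i, if b < x i ∧ x i ≤ z then l i else 0) +
        (∑' i, if z < x i ∧ x i ≤ 0 then l i else 0) =
        (∑' i, if 0 < x i ∧ x i ≤ z then l i else 0) +
        (∑' i, if b < x i ∧ x i ≤ 0 then l i else 0) := by
      rw [← Summable.tsum_add hfS hfBz, ← Summable.tsum_add hfAz hfBb]
      exact tsum_congr (band_identity x l b z hb0 hbz)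
    have hAb : (∑' i : ℕ, if 0 < x i ∧ x i ≤ b then l i else 0) = 0 := by
      have h0 : (fun i : ℕ => if 0 < x i ∧ x i ≤ b then l i else 0) = fun _ => 0 := by
        funext i
        rw [if_neg]
        rintro ⟨h1, h2⟩
        linarith
      rw [h0, tsum_zero]
    have h1 : Yinf x l z = (∑' i : ℕ, if 0 < x i ∧ x i ≤ z then l i else 0)
        - (∑' i : ℕ, if z < x i ∧ x i ≤ 0 then l i else 0) - z := rfl
    have h2 : Yinf x l b = (∑' i : ℕ, if 0 < x i ∧ x i ≤ b then l i else 0)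
        - (∑' i : ℕ, if b < x i ∧ x i ≤ 0 then l i else 0) - b := rfl
    rw [h1, h2, hAb] at hYblt
    have hSgt : z - b < ∑' i, if b < x i ∧ x i ≤ z then l i else 0 := by linarith
    -- upper bound
    set yk : ℕ → ℝ := fun k => sInf {y : ℝ | x k ≤ y ∧
      volume ((cover x l k)ᶜ ∩ Set.Ico (x k) y) = ENNReal.ofReal (l k)} with hykdef
    have hcovsucc : ∀ k, cover x l (k + 1) = cover x l k ∪ Set.Ico (x k) (yk k) :=
      fun k => rfl
    have hDvol : ∀ k, volume ((cover x l k)ᶜ ∩ Set.Ico (x k) (yk k))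
        = ENNReal.ofReal (l k) := fun k => (ysInf_spec x l k (hl k)).2
    have hyklez : ∀ k, x k ≤ z → yk k ≤ z := by
      intro k hk
      by_contra hgt
      push_neg at hgt
      exact hz (k + 1) (by rw [hcovsucc k]; exact Set.mem_union_right _ ⟨hk, hgt⟩)
    set D : ℕ → Set ℝ := fun k => (cover x l k)ᶜ ∩ Set.Ico (x k) (yk k) with hDdef
    have hdisj2 : ∀ i j : ℕ, i < j → Disjoint (D i) (D j) := by
      intro i j hij
      rw [Set.disjoint_left]
      intro t hti htj
      have h1 : t ∈ cover x l (i + 1) := by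
        rw [hcovsucc i]
        exact Set.mem_union_right _ hti.2
      exact htj.1 (cover_mono x l (Nat.succ_le_of_lt hij) h1)
    have hsum_le : ∀ F : Finset ℕ,
        (∑ i ∈ F, if b < x i ∧ x i ≤ z then l i else 0) ≤ z - b := by
      intro F
      rw [← Finset.sum_filter]
      set F' := F.filter fun i => b < x i ∧ x i ≤ z with hF'
      have hmemF' : ∀ i ∈ F', b < x i ∧ x i ≤ z := fun i hi =>
        (Finset.mem_filter.mp hi).2
      have hDsub : ∀ i ∈ F', D i ⊆ Set.Ioc b z := by
        intro i hi t ht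
        obtain ⟨hbx, hxz⟩ := hmemF' i hi
        obtain ⟨-, ht1, ht2⟩ := ht
        exact ⟨lt_of_lt_of_le hbx ht1, le_trans ht2.le (hyklez i hxz)⟩
      have hDdisj : (↑F' : Set ℕ).PairwiseDisjoint D := by
        intro i hi j hj hij
        rcases hij.lt_or_gt with h | h
        · exact hdisj2 i j h
        · exact (hdisj2 j i h).symm
      have hDmeas : ∀ i ∈ F', MeasurableSet (D i) := fun i _ =>
        ((cover_measurable x l i).compl).inter measurableSet_Ico
      have hle : (∑ i ∈ F', ENNReal.ofReal (l i)) ≤ ENNReal.ofReal (z - b) := by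
        calc ∑ i ∈ F', ENNReal.ofReal (l i) = ∑ i ∈ F', volume (D i) :=
              Finset.sum_congr rfl fun i _ => (hDvol i).symm
          _ = volume (⋃ i ∈ F', D i) := (measure_biUnion_finset hDdisj hDmeas).symm
          _ ≤ volume (Set.Ioc b z) := measure_mono (Set.iUnion₂_subset hDsub)
          _ = ENNReal.ofReal (z - b) := Real.volume_Ioc
      rw [← ENNReal.ofReal_sum_of_nonneg (fun i _ => (hl i).le)] at hle
      exact (ENNReal.ofReal_le_ofReal_iff (by linarith)).1 hle
    have hfinal := Summable.tsum_le_of_sum_le hfS hsum_le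
    linarith
  · ext z
    simp only [Set.mem_setOf_eq, Set.mem_univ, iff_true]
    obtain ⟨b, hble, hYblt⟩ := frequently_atBot.mp (hY (Yinf x l z)) z
    have h1 : Iinf x l z ≤ (Yinf x l b : EReal) := by
      have h0 : Iinf x l z = ⨅ y ∈ Set.Iic z, (Yinf x l y : EReal) := rfl
      rw [h0]
      exact iInf₂_le b (Set.mem_Iic.mpr hble)
    exact lt_of_le_of_lt h1 (EReal.coe_lt_coe_iff.2 hYblt)
end

section
/- Let α ∈ (1,2) and C > 0, and assume ν̄(x) ~ C x^{−α} as x → ∞ (i.e. x^α ν̄(x) → C). Then lim_{y→0⁺} y^{1−α} ∫_0^∞ (1 − e^{−yu}) ν̄(u) du = C Γ(2−α)/(α−1), where Γ is the Gamma function. -/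
open MeasureTheory Filter Set Real Topology

/-!
Substituting `t = y u` turns `y^{1-α} ∫ (1 - e^{-yu}) ν̄(u) du` into
`∫ (1 - e^{-t}) y^{-α} ν̄(t/y) dt`, and `y^{-α} ν̄(t/y) = t^{-α} (t/y)^α ν̄(t/y) → C t^{-α}`.
Markov's inequality `ν̄(u) ≤ (∫ |l| dν) / u` near `0` and the tail asymptotics near `∞` give
`ν̄(u) ≤ B u^{-α}` for all `u > 0`, so `B (1 - e^{-t}) t^{-α}` dominates, and dominated
convergence applies. Integration by parts against `t^{1-α}/(1-α)` evaluates
`∫_0^∞ (1 - e^{-t}) t^{-α} dt = Γ(2-α)/(α-1)`.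
-/

lemma one_sub_exp_neg_nonneg {t : ℝ} (ht : 0 ≤ t) : 0 ≤ 1 - exp (-t) :=
  sub_nonneg.2 (exp_le_one_iff.2 (neg_nonpos.2 ht))

lemma one_sub_exp_neg_le_self (t : ℝ) : 1 - exp (-t) ≤ t := by
  linarith [one_sub_le_exp_neg t]

lemma abs_one_sub_exp_neg_mul_rpow_le_rpow {t : ℝ} (ht : 0 ≤ t) (p : ℝ) :
    |(1 - exp (-t)) * t ^ p| ≤ t ^ p := by
  rw [abs_of_nonneg (mul_nonneg (one_sub_exp_neg_nonneg ht) (rpow_nonneg ht p))]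
  exact mul_le_of_le_one_left (rpow_nonneg ht p) (sub_le_self _ (exp_pos _).le)

lemma abs_one_sub_exp_neg_mul_rpow_le_rpow_add_one {t : ℝ} (ht : 0 < t) (p : ℝ) :
    |(1 - exp (-t)) * t ^ p| ≤ t ^ (p + 1) := by
  rw [abs_of_nonneg (mul_nonneg (one_sub_exp_neg_nonneg ht.le) (rpow_nonneg ht.le p)),
    rpow_add_one ht.ne', mul_comm (t ^ p)]
  exact mul_le_mul_of_nonneg_right (one_sub_exp_neg_le_self t) (rpow_nonneg ht.le p)

lemma tendsto_one_sub_exp_neg_mul_rpow_nhdsGT_zero {p : ℝ} (hp : -1 < p) :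
    Tendsto (fun t : ℝ => (1 - exp (-t)) * t ^ p) (𝓝[>] 0) (𝓝 0) := by
  have hpow : Tendsto (fun t : ℝ => t ^ (p + 1)) (𝓝[>] 0) (𝓝 0) := by
    have h := (continuousAt_rpow_const 0 (p + 1) (Or.inr (by linarith))).tendsto
    rw [zero_rpow (by linarith)] at h
    exact h.mono_left nhdsWithin_le_nhds
  refine squeeze_zero_norm' ?_ hpow
  filter_upwards [self_mem_nhdsWithin] with t ht
  exact abs_one_sub_exp_neg_mul_rpow_le_rpow_add_one ht p

lemma integrableOn_one_sub_exp_neg_mul_rpow_neg {α : ℝ} (hα1 : 1 < α) (hα2 : α < 2) :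
    IntegrableOn (fun t : ℝ => (1 - exp (-t)) * t ^ (-α)) (Ioi 0) := by
  have hmeas : Measurable fun t : ℝ => (1 - exp (-t)) * t ^ (-α) := by fun_prop
  rw [← Ioc_union_Ioi_eq_Ioi zero_le_one, integrableOn_union]
  constructor
  · refine (intervalIntegral.intervalIntegrable_rpow' (a := 0) (b := 1)
      (by linarith : -1 < -α + 1)).1.mono' hmeas.aestronglyMeasurable ?_
    filter_upwards [ae_restrict_mem measurableSet_Ioc] with t ht
    exact abs_one_sub_exp_neg_mul_rpow_le_rpow_add_one ht.1 _
  · refine (integrableOn_Ioi_rpow_of_lt (by linarith : -α < -1) one_pos).mono'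
      hmeas.aestronglyMeasurable ?_
    filter_upwards [ae_restrict_mem measurableSet_Ioi] with t ht
    exact abs_one_sub_exp_neg_mul_rpow_le_rpow (zero_le_one.trans ht.le) _

lemma integral_one_sub_exp_neg_mul_rpow_neg {α : ℝ} (hα1 : 1 < α) (hα2 : α < 2) :
    ∫ t in Ioi (0 : ℝ), (1 - exp (-t)) * t ^ (-α) = Gamma (2 - α) / (α - 1) := by
  have hα : 1 - α ≠ 0 := by linarith
  set u : ℝ → ℝ := fun t => 1 - exp (-t)
  set v : ℝ → ℝ := fun t => t ^ (1 - α) / (1 - α)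
  have hu : ∀ t ∈ Ioi (0 : ℝ), HasDerivAt u (exp (-t)) t := fun t _ => by
    simpa using ((hasDerivAt_neg t).exp).const_sub 1
  have hv : ∀ t ∈ Ioi (0 : ℝ), HasDerivAt v (t ^ (-α)) t := fun t ht => by
    refine ((hasDerivAt_rpow_const (Or.inl ht.ne')).div_const (1 - α)).congr_deriv ?_
    rw [mul_div_cancel_left₀ _ hα, sub_sub_cancel_left]
  have hGamma : ∫ t in Ioi (0 : ℝ), exp (-t) * v t = Gamma (2 - α) / (1 - α) := by
    rw [Gamma_eq_integral (by linarith), ← integral_div]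
    simp only [v, mul_div_assoc, show 2 - α - 1 = 1 - α by ring]
  have hGamma_int : IntegrableOn (fun t => exp (-t) * v t) (Ioi 0) := by
    have h := (GammaIntegral_convergent (s := 2 - α) (by linarith)).div_const (1 - α)
    simp only [mul_div_assoc, show 2 - α - 1 = 1 - α by ring] at h
    exact h
  have h_zero : Tendsto (fun t => u t * v t) (𝓝[>] 0) (𝓝 0) := by
    simpa only [mul_div_assoc, zero_div] using
      (tendsto_one_sub_exp_neg_mul_rpow_nhdsGT_zero (by linarith : -1 < 1 - α)).div_const (1 - α)
  have h_infty : Tendsto (fun t => u t * v t) atTop (𝓝 0) := by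
    have hu : Tendsto u atTop (𝓝 1) := by
      simpa using tendsto_exp_neg_atTop_nhds_zero.const_sub 1
    have hv : Tendsto v atTop (𝓝 0) := by
      simpa [v, neg_sub] using
        (tendsto_rpow_neg_atTop (by linarith : 0 < α - 1)).div_const (1 - α)
    simpa using hu.mul hv
  rw [integral_Ioi_mul_deriv_eq_deriv_mul hu hv
    (integrableOn_one_sub_exp_neg_mul_rpow_neg hα1 hα2) hGamma_int h_zero h_infty, hGamma,
    ← neg_sub α 1, div_neg]
  ring

lemma exists_abs_le_mul_rpow_neg_of_tendsto {f : ℝ → ℝ} {α C K : ℝ} (hα : 1 ≤ α)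
    (hK : ∀ u, 0 < u → u * |f u| ≤ K)
    (htail : Tendsto (fun x => x ^ α * f x) atTop (𝓝 C)) :
    ∃ B, ∀ u, 0 < u → |f u| ≤ B * u ^ (-α) := by
  obtain ⟨x₁, hx₁⟩ := eventually_atTop.1 (htail.abs.eventually_le_const (lt_add_one |C|))
  set x₀ := max x₁ 1
  have hK₀ : 0 ≤ K := (mul_nonneg zero_le_one (abs_nonneg _)).trans (hK 1 one_pos)
  refine ⟨max (|C| + 1) (K * x₀ ^ (α - 1)), fun u hu => ?_⟩
  have hu_pow : u ^ (-α) * u ^ α = 1 := by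
    rw [rpow_neg hu.le, inv_mul_cancel₀ (rpow_pos_of_pos hu α).ne']
  rcases le_or_gt x₀ u with hxu | hux
  · calc |f u| = u ^ (-α) * |u ^ α * f u| := by
          rw [abs_mul, abs_of_pos (rpow_pos_of_pos hu α), ← mul_assoc, hu_pow, one_mul]
      _ ≤ u ^ (-α) * (|C| + 1) := by
          gcongr
          exact hx₁ u ((le_max_left _ _).trans hxu)
      _ ≤ max (|C| + 1) (K * x₀ ^ (α - 1)) * u ^ (-α) := by
          rw [mul_comm]; gcongr; exact le_max_left _ _
  · calc |f u| = (u * |f u|) * (u ^ (α - 1) * u ^ (-α)) := by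
          rw [← rpow_add hu, show α - 1 + -α = -1 by ring, rpow_neg_one]
          field_simp
      _ ≤ K * (x₀ ^ (α - 1) * u ^ (-α)) := by
          gcongr
          exact hK u hu
      _ ≤ max (|C| + 1) (K * x₀ ^ (α - 1)) * u ^ (-α) := by
          rw [← mul_assoc]; gcongr; exact le_max_right _ _

lemma mul_measure_Ioi_toReal_le_integral_abs {ν : Measure ℝ}
    (hint : Integrable (fun l : ℝ => l) ν) {u : ℝ} (hu : 0 < u) :
    u * (ν (Ioi u)).toReal ≤ ∫ l, |l| ∂ν := by
  calc u * (ν (Ioi u)).toReal ≤ u * ν.real {l | u ≤ |l|} :=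
        mul_le_mul_of_nonneg_left (measureReal_mono (fun l hl => hl.le.trans (le_abs_self l))
          (hint.measure_norm_ge_lt_top hu).ne) hu.le
    _ ≤ ∫ l, |l| ∂ν :=
        mul_meas_ge_le_integral_of_nonneg (ae_of_all _ fun l => abs_nonneg l) hint.abs u

lemma abs_rpow_neg_mul_comp_inv_mul_le {f : ℝ → ℝ} {α B y t : ℝ}
    (hdom : ∀ u, 0 < u → |f u| ≤ B * u ^ (-α)) (hy : 0 < y) (ht : 0 < t) :
    |y ^ (-α) * f (y⁻¹ * t)| ≤ B * t ^ (-α) := by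
  calc |y ^ (-α) * f (y⁻¹ * t)| = y ^ (-α) * |f (y⁻¹ * t)| := by
        rw [abs_mul, abs_of_pos (rpow_pos_of_pos hy _)]
    _ ≤ y ^ (-α) * (B * (y⁻¹ * t) ^ (-α)) := by
        gcongr
        exact hdom _ (by positivity)
    _ = B * t ^ (-α) := by
        rw [mul_rpow (inv_pos.2 hy).le ht.le, inv_rpow hy.le, rpow_neg hy.le, rpow_neg ht.le]
        field_simp

lemma tendsto_rpow_neg_mul_comp_inv_mul {f : ℝ → ℝ} {α C t : ℝ} (ht : 0 < t)
    (htail : Tendsto (fun x => x ^ α * f x) atTop (𝓝 C)) :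
    Tendsto (fun y => y ^ (-α) * f (y⁻¹ * t)) (𝓝[>] 0) (𝓝 (C * t ^ (-α))) := by
  have h := (htail.comp ((tendsto_inv_nhdsGT_zero (𝕜 := ℝ)).atTop_mul_const ht)).mul_const
    (t ^ (-α))
  refine h.congr' ?_
  filter_upwards [self_mem_nhdsWithin] with y hy
  simp only [Function.comp_apply]
  rw [mul_rpow (inv_pos.2 hy).le ht.le, inv_rpow hy.le, rpow_neg hy.le, rpow_neg ht.le]
  field_simp

theorem tendsto_rpow_mul_integral_one_sub_exp_mul {f : ℝ → ℝ} {α B C : ℝ}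
    (hα1 : 1 < α) (hα2 : α < 2) (hf : Measurable f)
    (hdom : ∀ u, 0 < u → |f u| ≤ B * u ^ (-α))
    (htail : Tendsto (fun x => x ^ α * f x) atTop (𝓝 C)) :
    Tendsto (fun y => y ^ (1 - α) * ∫ u in Ioi 0, (1 - exp (-(y * u))) * f u)
      (𝓝[>] 0) (𝓝 (C * Gamma (2 - α) / (α - 1))) := by
  have hscale : ∀ y : ℝ, 0 < y → y ^ (1 - α) * ∫ u in Ioi 0, (1 - exp (-(y * u))) * f u =
      ∫ t in Ioi 0, (1 - exp (-t)) * (y ^ (-α) * f (y⁻¹ * t)) := fun y hy => by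
    have h := integral_comp_mul_left_Ioi (fun t => (1 - exp (-t)) * f (y⁻¹ * t)) 0 hy
    simp only [inv_mul_cancel_left₀ hy.ne', mul_zero, smul_eq_mul] at h
    rw [h, ← mul_assoc, ← rpow_neg_one, ← rpow_add hy, ← integral_const_mul]
    congr 1 with t
    ring_nf
  have hlim : Tendsto (fun y => ∫ t in Ioi 0, (1 - exp (-t)) * (y ^ (-α) * f (y⁻¹ * t)))
      (𝓝[>] 0) (𝓝 (∫ t in Ioi 0, (1 - exp (-t)) * (C * t ^ (-α)))) := by
    refine tendsto_integral_filter_of_dominated_convergence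
      (fun t => B * ((1 - exp (-t)) * t ^ (-α))) ?_ ?_
      ((integrableOn_one_sub_exp_neg_mul_rpow_neg hα1 hα2).const_mul B) ?_
    · exact Eventually.of_forall fun y => by fun_prop
    · filter_upwards [self_mem_nhdsWithin] with y hy
      filter_upwards [ae_restrict_mem measurableSet_Ioi] with t ht
      rw [norm_mul, norm_eq_abs, norm_eq_abs, abs_of_nonneg (one_sub_exp_neg_nonneg ht.le),
        mul_left_comm]
      exact mul_le_mul_of_nonneg_left (abs_rpow_neg_mul_comp_inv_mul_le hdom hy ht)
        (one_sub_exp_neg_nonneg ht.le)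
    · filter_upwards [ae_restrict_mem measurableSet_Ioi] with t ht
      exact (tendsto_rpow_neg_mul_comp_inv_mul ht htail).const_mul _
  have hvalue :
      ∫ t in Ioi 0, (1 - exp (-t)) * (C * t ^ (-α)) = C * Gamma (2 - α) / (α - 1) := by
    simp_rw [mul_left_comm _ C]
    rw [integral_const_mul, integral_one_sub_exp_neg_mul_rpow_neg hα1 hα2, mul_div_assoc]
  rw [← hvalue]
  refine hlim.congr' ?_
  filter_upwards [self_mem_nhdsWithin] with y hy using (hscale y hy).symm

theorem tail_integral_asymptotic_stable_general
    (ν : Measure ℝ)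
    (hint : Integrable (fun l : ℝ => l) ν)
    (α C : ℝ) (hα1 : 1 < α) (hα2 : α < 2)
    (htail : Tendsto (fun x : ℝ => x ^ α * (ν (Set.Ioi x)).toReal)
      atTop (nhds C)) :
    Tendsto
      (fun y : ℝ =>
        y ^ (1 - α) * ∫ u in Set.Ioi (0 : ℝ),
          (1 - Real.exp (-(y * u))) * (ν (Set.Ioi u)).toReal)
      (nhdsWithin 0 (Set.Ioi 0)) (nhds (C * Real.Gamma (2 - α) / (α - 1))) := by
  have hmeas : Measurable fun u : ℝ => (ν (Ioi u)).toReal :=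
    ENNReal.measurable_toReal.comp
      (Antitone.measurable fun _ _ h => measure_mono (Ioi_subset_Ioi h))
  have hmarkov : ∀ u : ℝ, 0 < u → u * |(ν (Ioi u)).toReal| ≤ ∫ l, |l| ∂ν := by
    intro u hu
    rw [abs_of_nonneg ENNReal.toReal_nonneg]
    exact mul_measure_Ioi_toReal_le_integral_abs hint hu
  obtain ⟨B, hB⟩ := exists_abs_le_mul_rpow_neg_of_tendsto hα1.le hmarkov htail
  exact tendsto_rpow_mul_integral_one_sub_exp_mul hα1 hα2 hmeas hB htail

/-- Let `ν` be a measure on `(0,∞)` with finite, positive mean, and suppose its tail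
satisfies `ν̄(x) ~ C x^{-α}` as `x → ∞` for some `α ∈ (1,2)` and `C > 0`. Then
`lim_{y→0⁺} y^{1-α} ∫_0^∞ (1 - e^{-y u}) ν̄(u) du = C Γ(2-α) / (α-1)`. -/
theorem tail_integral_asymptotic_stable
    (ν : Measure ℝ) (hν0 : ν (Set.Iic 0) = 0)
    (hint : Integrable (fun l : ℝ => l) ν)
    (hmpos : 0 < ∫ l, l ∂ν)
    (α C : ℝ) (hα1 : 1 < α) (hα2 : α < 2) (hC : 0 < C)
    (htail : Tendsto (fun x : ℝ => x ^ α * (ν (Set.Ioi x)).toReal)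
      atTop (nhds C)) :
    Tendsto
      (fun y : ℝ =>
        y ^ (1 - α) * ∫ u in Set.Ioi (0 : ℝ),
          (1 - Real.exp (-(y * u))) * (ν (Set.Ioi u)).toReal)
      (nhdsWithin 0 (Set.Ioi 0)) (nhds (C * Real.Gamma (2 - α) / (α - 1))) :=
  tail_integral_asymptotic_stable_general ν hint α C hα1 hα2 htail
end

section
/- If ν has finite second moment m₂ = ∫_0^∞ l² ν(dl) < ∞, then for every y ≥ 0, lim_{t→(1/m)⁻} (1−mt)^{−2} Ψ^{(t)}((1−mt) y) = −y − (m₂/m) y²/2. -/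
open MeasureTheory Filter

/-- The Laplace exponent `Ψ^(t)(ρ) = -ρ + t ∫_0^∞ (1 - e^{-ρ l}) ν(dl)`. -/
noncomputable def Psi (ν : Measure ℝ) (t ρ : ℝ) : ℝ :=
  -ρ + t * ∫ l, (1 - Real.exp (-(ρ * l))) ∂ν

/-!
Splitting off the first-order term, `Ψ^(t)(ρ) = -ρ (1 - m t) - t ∫ (e^{-ρl} - 1 + ρl) ν(dl)`.
With `ε = 1 - m t` and `ρ = ε y` the first term rescales to exactly `-y`. Since
`0 ≤ e^{-x} - 1 + x ≤ x² / 2` for `x ≥ 0`, the rescaled remainders `ε⁻² (e^{-εyl} - 1 + εyl)`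
are dominated by their pointwise limit `y² l² / 2`, which is integrable by the second-moment
assumption; dominated convergence gives `ε⁻² ∫ (e^{-εyl} - 1 + εyl) ν(dl) → y² m₂ / 2`.
-/

open Topology Real

namespace Real

lemma abs_exp_neg_sub_one_add_sub_sq_div_two_le {x : ℝ} (hx : |x| ≤ 1) :
    |exp (-x) - 1 + x - x ^ 2 / 2| ≤ |x| ^ 3 := by
  have h := exp_bound (x := -x) (by rwa [abs_neg]) (n := 3) (by norm_num)
  norm_num [Finset.sum_range_succ, Nat.factorial] at h
  calc |exp (-x) - 1 + x - x ^ 2 / 2| = |exp (-x) - (1 + -x + x ^ 2 / 2)| := by ring_nf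
    _ ≤ |x| ^ 3 * (2 / 9) := h
    _ ≤ |x| ^ 3 := by nlinarith [pow_nonneg (abs_nonneg x) 3]

lemma exp_neg_sub_one_add_nonneg (x : ℝ) : 0 ≤ exp (-x) - 1 + x := by
  linarith [one_sub_le_exp_neg x]

lemma exp_neg_sub_one_add_le_self {x : ℝ} (hx : 0 ≤ x) : exp (-x) - 1 + x ≤ x := by
  linarith [exp_le_one_iff.mpr (neg_nonpos.mpr hx)]

lemma exp_neg_sub_one_add_le_sq_div_two {x : ℝ} (hx : 0 ≤ x) :
    exp (-x) - 1 + x ≤ x ^ 2 / 2 := by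
  have hderiv (z : ℝ) : HasDerivAt (fun z ↦ z ^ 2 / 2 + 1 - z - exp (-z))
      (exp (-z) - 1 + z) z := by
    have := ((((hasDerivAt_pow 2 z).div_const 2).add_const 1).sub (hasDerivAt_id z)).sub
      (hasDerivAt_neg z).exp
    exact this.congr_deriv (by norm_num; ring)
  have hmono : Monotone (fun z ↦ z ^ 2 / 2 + 1 - z - exp (-z)) :=
    monotone_of_deriv_nonneg (fun z ↦ (hderiv z).differentiableAt)
      fun z ↦ (hderiv z).deriv ▸ exp_neg_sub_one_add_nonneg z
  have := hmono hx
  simp only [exp_zero, neg_zero] at this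
  linarith

lemma tendsto_inv_sq_mul_exp_neg_sub_one_add (c : ℝ) :
    Tendsto (fun ε ↦ (ε ^ 2)⁻¹ * (exp (-(ε * c)) - 1 + ε * c)) (𝓝[≠] 0) (𝓝 (c ^ 2 / 2)) := by
  rw [← tendsto_sub_nhds_zero_iff]
  refine squeeze_zero_norm' (a := fun ε ↦ |ε| * |c| ^ 3) ?_ ?_
  · have hsmall : ∀ᶠ ε in 𝓝[≠] (0 : ℝ), |ε * c| ≤ 1 :=
      nhdsWithin_le_nhds <| ((continuous_mul_const c).abs.tendsto' 0 0 (by simp)).eventually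
        (eventually_le_nhds one_pos)
    filter_upwards [hsmall, self_mem_nhdsWithin] with ε hε (hε0 : ε ≠ 0)
    have hsplit : (ε ^ 2)⁻¹ * (exp (-(ε * c)) - 1 + ε * c) - c ^ 2 / 2 =
        (ε ^ 2)⁻¹ * (exp (-(ε * c)) - 1 + ε * c - (ε * c) ^ 2 / 2) := by
      field_simp
    calc ‖(ε ^ 2)⁻¹ * (exp (-(ε * c)) - 1 + ε * c) - c ^ 2 / 2‖
        = (ε ^ 2)⁻¹ * |exp (-(ε * c)) - 1 + ε * c - (ε * c) ^ 2 / 2| := by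
          rw [norm_eq_abs, hsplit, abs_mul, abs_of_pos (by positivity)]
      _ ≤ (ε ^ 2)⁻¹ * |ε * c| ^ 3 := by
          gcongr; exact abs_exp_neg_sub_one_add_sub_sq_div_two_le hε
      _ = |ε| * |c| ^ 3 := by
          rw [abs_mul]; field_simp; rw [sq_abs]
  · exact ((continuous_abs.mul continuous_const).tendsto' (0 : ℝ) 0 (by simp)).mono_left
      nhdsWithin_le_nhds

end Real

lemma tendsto_one_sub_mul_nhdsGT_zero {m : ℝ} (hm : 0 < m) :
    Tendsto (fun t ↦ 1 - m * t) (𝓝[<] (1 / m)) (𝓝[>] 0) := by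
  refine tendsto_nhdsWithin_of_tendsto_nhds_of_eventually_within _ ?_ ?_
  · refine ((continuous_const.sub (continuous_const_mul m)).tendsto' _ _ ?_).mono_left
      nhdsWithin_le_nhds
    simp [hm.ne']
  · filter_upwards [self_mem_nhdsWithin] with t (ht : t < 1 / m)
    exact sub_pos.mpr ((lt_div_iff₀' hm).mp ht)

section

variable {ν : Measure ℝ}

lemma integrable_exp_neg_mul_sub_one_add (hν : ∀ᵐ l ∂ν, 0 ≤ l)
    (hint : Integrable (fun l ↦ l) ν) {ρ : ℝ} (hρ : 0 ≤ ρ) :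
    Integrable (fun l ↦ exp (-(ρ * l)) - 1 + ρ * l) ν := by
  refine (hint.const_mul ρ).mono' (by fun_prop) ?_
  filter_upwards [hν] with l hl
  rw [norm_of_nonneg (exp_neg_sub_one_add_nonneg _)]
  exact exp_neg_sub_one_add_le_self (mul_nonneg hρ hl)

lemma Psi_eq_sub_integral (hν : ∀ᵐ l ∂ν, 0 ≤ l) (hint : Integrable (fun l ↦ l) ν)
    (t : ℝ) {ρ : ℝ} (hρ : 0 ≤ ρ) :
    Psi ν t ρ = -ρ + t * (ρ * ∫ l, l ∂ν - ∫ l, (exp (-(ρ * l)) - 1 + ρ * l) ∂ν) := by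
  have hsplit : (fun l ↦ 1 - exp (-(ρ * l))) = fun l ↦ ρ * l - (exp (-(ρ * l)) - 1 + ρ * l) := by
    ext l
    ring
  rw [Psi, hsplit, integral_sub (hint.const_mul ρ) (integrable_exp_neg_mul_sub_one_add hν hint hρ),
    integral_const_mul]

lemma tendsto_inv_sq_mul_integral_exp_neg_sub_one_add (hν : ∀ᵐ l ∂ν, 0 ≤ l)
    (hint2 : Integrable (fun l ↦ l ^ 2) ν) {y : ℝ} (hy : 0 ≤ y) :
    Tendsto (fun ε ↦ (ε ^ 2)⁻¹ * ∫ l, (exp (-(ε * y * l)) - 1 + ε * y * l) ∂ν)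
      (𝓝[>] 0) (𝓝 (y ^ 2 / 2 * ∫ l, l ^ 2 ∂ν)) := by
  simp_rw [← integral_const_mul]
  refine tendsto_integral_filter_of_dominated_convergence _
    (Eventually.of_forall fun ε ↦ by fun_prop) ?_ (hint2.const_mul (y ^ 2 / 2)) ?_
  · filter_upwards [self_mem_nhdsWithin] with ε (hε : 0 < ε)
    filter_upwards [hν] with l hl
    have hx : 0 ≤ ε * y * l := by positivity
    rw [norm_of_nonneg (mul_nonneg (by positivity) (exp_neg_sub_one_add_nonneg _))]
    calc (ε ^ 2)⁻¹ * (exp (-(ε * y * l)) - 1 + ε * y * l)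
        ≤ (ε ^ 2)⁻¹ * ((ε * y * l) ^ 2 / 2) := by
          gcongr; exact exp_neg_sub_one_add_le_sq_div_two hx
      _ = y ^ 2 / 2 * l ^ 2 := by field_simp
  · filter_upwards with l
    have := (tendsto_inv_sq_mul_exp_neg_sub_one_add (y * l)).mono_left
      (nhdsGT_le_nhdsNE 0)
    simp only [← mul_assoc, mul_pow] at this
    convert this using 2; ring

end

/-- If `ν` (a measure on `(0,∞)` with finite positive mean `m`) has finite second
moment `m₂`, then for every `y ≥ 0`,
`lim_{t→(1/m)⁻} (1-mt)⁻² Ψ^(t)((1-mt) y) = -y - (m₂/m) y²/2`. -/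
theorem Psi_rescaled_limit_finite_second_moment
    (ν : Measure ℝ) (hν0 : ν (Set.Iic 0) = 0)
    (hint : Integrable (fun l : ℝ => l) ν)
    (m : ℝ) (hm : m = ∫ l, l ∂ν) (hmpos : 0 < m)
    (hint2 : Integrable (fun l : ℝ => l ^ 2) ν)
    (m2 : ℝ) (hm2 : m2 = ∫ l, l ^ 2 ∂ν)
    (y : ℝ) (hy : 0 ≤ y) :
    Tendsto (fun t : ℝ => ((1 - m * t) ^ 2)⁻¹ * Psi ν t ((1 - m * t) * y))
      (nhdsWithin (1 / m) (Set.Iio (1 / m)))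
      (nhds (-y - (m2 / m) * y ^ 2 / 2)) := by
  have hν : ∀ᵐ l ∂ν, 0 ≤ l :=
    measure_mono_null (fun l (hl : ¬0 ≤ l) ↦ (not_le.mp hl).le) hν0
  have hgap := tendsto_one_sub_mul_nhdsGT_zero hmpos
  have hrescaled : ∀ᶠ t in 𝓝[<] (1 / m),
      -y - t * (((1 - m * t) ^ 2)⁻¹ *
        ∫ l, (exp (-((1 - m * t) * y * l)) - 1 + (1 - m * t) * y * l) ∂ν) =
      ((1 - m * t) ^ 2)⁻¹ * Psi ν t ((1 - m * t) * y) := by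
    filter_upwards [hgap self_mem_nhdsWithin] with t (ht : 0 < 1 - m * t)
    rw [Psi_eq_sub_integral hν hint t (by positivity), ← hm]
    generalize (∫ l, _ ∂ν : ℝ) = I
    rw [show -((1 - m * t) * y) + t * ((1 - m * t) * y * m - I) = (1 - m * t) ^ 2 * -y - t * I
      by ring, mul_sub, inv_mul_cancel_left₀ (pow_ne_zero 2 ht.ne')]
    ring
  have hlim := (tendsto_const_nhds (x := -y)).sub ((tendsto_id.mono_left nhdsWithin_le_nhds).mul
    ((tendsto_inv_sq_mul_integral_exp_neg_sub_one_add hν hint2 hy).comp hgap))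
  rw [← hm2] at hlim
  convert hlim.congr' hrescaled using 2
  ring
end
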